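/- arXiv:2212.01955 — 7 statements merged into one kernel-verified Lean document; each statement's English description precedes it below -/
import Mathlib

section
/- If a is a positive integer with an odd number of decimal digits (i.e., the length of the decimal digit list of a is odd), then 99 divides a - rev(a), i.e., 99 divides f(a). -/
/-- Reverse the decimal digits of a natural number. -/
def rev (m : ℕ) : ℕ := Nat.ofDigits 10 (Nat.digits 10 m).reverse

/-- The reflection of an integer: reverse its digits and flip its sign. -/
def reflect (a : ℤ) : ℤ := if 0 ≤ a then -(rev a.toNat : ℤ) else (rev (-a).toNat : ℤ)

/-- The reflective step map. -/
def f (a : ℤ) : ℤ := a + reflect a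

/-! If `b ^ 2 = 1`, then `b⁻¹ = b`, so reading a digit string backwards only multiplies its value
by a power of `b`; for strings of odd length that power is even and the value is unchanged.
Modulo `99 = 10 ^ 2 - 1` this makes `a ≡ rev a` whenever `a` has an odd number of digits. -/

namespace Nat

variable {R : Type*} [CommSemiring R] {b : R}

theorem ofDigits_append_singleton (L : List ℕ) (d : ℕ) :
    ofDigits b (L ++ [d]) = ofDigits b L + b ^ L.length * d := by
  induction L with
  | nil => simp [ofDigits]
  | cons e t ih => rw [List.cons_append, ofDigits, ofDigits, ih, List.length_cons]; ring

theorem ofDigits_reverse_mul_of_sq_eq_one (hb : b ^ 2 = 1) (L : List ℕ) :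
    ofDigits b L.reverse * b = b ^ L.length * ofDigits b L := by
  induction L with
  | nil => simp [ofDigits]
  | cons d t ih =>
    rw [List.reverse_cons, ofDigits_append_singleton, add_mul, ih, List.length_reverse, ofDigits,
      List.length_cons]
    calc _ = b ^ t.length * ofDigits b t * b ^ 2 + b ^ t.length * d * b := by rw [hb, mul_one]
      _ = _ := by ring

theorem ofDigits_reverse_of_sq_eq_one (hb : b ^ 2 = 1) {L : List ℕ} (hL : Odd L.length) :
    ofDigits b L.reverse = ofDigits b L := by
  obtain ⟨k, hk⟩ := hL
  have h := ofDigits_reverse_mul_of_sq_eq_one hb L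
  rw [hk, pow_succ, pow_mul, hb, one_pow, one_mul] at h
  calc ofDigits b L.reverse = ofDigits b L.reverse * b * b := by rw [mul_assoc, ← sq, hb, mul_one]
    _ = ofDigits b L := by rw [h, mul_comm b, mul_assoc, ← sq, hb, mul_one]

end Nat

theorem cast_rev_of_odd_length {R : Type*} [CommSemiring R] (h10 : (10 : R) ^ 2 = 1) {n : ℕ}
    (hn : Odd (Nat.digits 10 n).length) : (rev n : R) = n := by
  conv_rhs => rw [← Nat.ofDigits_digits 10 n]
  rw [rev, Nat.coe_ofDigits, Nat.coe_ofDigits, Nat.cast_ofNat,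
    Nat.ofDigits_reverse_of_sq_eq_one h10 hn]

theorem f_of_nonneg {a : ℤ} (ha : 0 ≤ a) : f a = a - rev a.toNat := by
  rw [f, reflect, if_pos ha, sub_eq_add_neg]

theorem odd_digits_div_99_general (a : ℤ)
    (hodd : Odd (Nat.digits 10 a.toNat).length) :
    (99 : ℤ) ∣ f a := by
  have ha : 0 < a := by
    by_contra! h
    simp [Int.toNat_of_nonpos h] at hodd
  rw [f_of_nonneg ha.le]
  refine (ZMod.intCast_zmod_eq_zero_iff_dvd _ 99).mp ?_
  rw [Int.cast_sub, ← Int.toNat_of_nonneg ha.le, Int.toNat_natCast, Int.cast_natCast,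
    Int.cast_natCast, cast_rev_of_odd_length (by decide) hodd, sub_self]

theorem odd_digits_div_99 (a : ℤ) (ha : 0 < a)
    (hodd : Odd (Nat.digits 10 a.toNat).length) :
    (99 : ℤ) ∣ f a :=
  odd_digits_div_99_general a hodd
end

section
/- For every three-digit positive integer n (100 ≤ n ≤ 999), there exists k with 1 ≤ k ≤ 6 such that the k-th iterate f^[k](n) of the reflective step map equals 0. -/
lemma step_m792 : f (-792:ℤ) = -495 := by
  simp [f, reflect, rev]; try norm_num [Nat.ofDigits]

lemma step_m693 : f (-693:ℤ) = -297 := by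
  simp [f, reflect, rev]; try norm_num [Nat.ofDigits]

lemma step_m594 : f (-594:ℤ) = -99 := by
  simp [f, reflect, rev]; try norm_num [Nat.ofDigits]

lemma step_m495 : f (-495:ℤ) = 99 := by
  simp [f, reflect, rev]; try norm_num [Nat.ofDigits]

lemma step_m396 : f (-396:ℤ) = 297 := by
  simp [f, reflect, rev]; try norm_num [Nat.ofDigits]

lemma step_m297 : f (-297:ℤ) = 495 := by
  simp [f, reflect, rev]; try norm_num [Nat.ofDigits]

lemma step_m198 : f (-198:ℤ) = 693 := by
  simp [f, reflect, rev]; try norm_num [Nat.ofDigits]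

lemma step_m99 : f (-99:ℤ) = 0 := by
  simp [f, reflect, rev]; try norm_num [Nat.ofDigits]

lemma step_p0 : f (0:ℤ) = 0 := by
  simp [f, reflect, rev]; try norm_num [Nat.ofDigits]

lemma step_p99 : f (99:ℤ) = 0 := by
  simp [f, reflect, rev]; try norm_num [Nat.ofDigits]

lemma step_p198 : f (198:ℤ) = -693 := by
  simp [f, reflect, rev]; try norm_num [Nat.ofDigits]

lemma step_p297 : f (297:ℤ) = -495 := by
  simp [f, reflect, rev]; try norm_num [Nat.ofDigits]

lemma step_p396 : f (396:ℤ) = -297 := by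
  simp [f, reflect, rev]; try norm_num [Nat.ofDigits]

lemma step_p495 : f (495:ℤ) = -99 := by
  simp [f, reflect, rev]; try norm_num [Nat.ofDigits]

lemma step_p594 : f (594:ℤ) = 99 := by
  simp [f, reflect, rev]; try norm_num [Nat.ofDigits]

lemma step_p693 : f (693:ℤ) = 297 := by
  simp [f, reflect, rev]; try norm_num [Nat.ofDigits]

lemma step_p792 : f (792:ℤ) = 495 := by
  simp [f, reflect, rev]; try norm_num [Nat.ofDigits]

lemma step_p891 : f (891:ℤ) = 693 := by
  simp [f, reflect, rev]; try norm_num [Nat.ofDigits]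

theorem three_digit_reflective_zero (n : ℤ) (h1 : 100 ≤ n) (h2 : n ≤ 999) :
    ∃ k : ℕ, 1 ≤ k ∧ k ≤ 6 ∧ f^[k] n = 0 := by
  refine ⟨6, by norm_num, by norm_num, ?_⟩
  obtain ⟨m, rfl⟩ : ∃ m : ℕ, n = m := ⟨n.toNat, by omega⟩
  have hm1 : 100 ≤ m := by exact_mod_cast h1
  have hm2 : m ≤ 999 := by exact_mod_cast h2
  have hd : Nat.digits 10 m = [m % 10, m / 10 % 10, m / 100] := by
    rw [Nat.digits_def' (by norm_num : (1:ℕ) < 10) (by omega),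
        Nat.digits_def' (by norm_num : (1:ℕ) < 10) (show 0 < m / 10 by omega),
        Nat.digits_def' (by norm_num : (1:ℕ) < 10) (show 0 < m / 10 / 10 by omega)]
    have e1 : m / 10 / 10 = m / 100 := by omega
    have e2 : m / 100 / 10 = 0 := by omega
    have e3 : m / 100 % 10 = m / 100 := by omega
    rw [e1, e2, e3]
    simp
  have hrev : (rev m : ℤ) = (m/100 : ℕ) + 10 * ((m/10 % 10 : ℕ) : ℤ) + 100 * ((m % 10 : ℕ) : ℤ) := by
    rw [rev, hd]
    simp [Nat.ofDigits]
    ring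
  have hf : f (m : ℤ) = 99 * (((m/100 : ℕ) : ℤ) - ((m % 10 : ℕ) : ℤ)) := by
    have h0 : (0:ℤ) ≤ (m:ℤ) := by positivity
    rw [f, reflect, if_pos h0, Int.toNat_natCast, hrev]
    have : m = 100 * (m/100) + 10 * (m/10 % 10) + m % 10 := by omega
    push_cast
    omega
  obtain ⟨d, hd1, hd2, hfd⟩ : ∃ d : ℤ, -8 ≤ d ∧ d ≤ 9 ∧ f (m:ℤ) = 99 * d := by
    refine ⟨_, ?_, ?_, hf⟩ <;> omega
  rw [show (6:ℕ) = 5 + 1 from rfl, Function.iterate_succ_apply, hfd]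
  interval_cases d <;>
    norm_num [Function.iterate_succ_apply, step_m792, step_m693, step_m594, step_m495, step_m396, step_m297, step_m198, step_m99, step_p0, step_p99, step_p198, step_p297, step_p396, step_p495, step_p594, step_p693, step_p792, step_p891]
end

section
/- The integers 2178, -6534, -2178, 6534 form a 4-cycle of the reflective step map: f(2178) = -6534, f(-6534) = -2178, f(-2178) = 6534, and f(6534) = 2178; in particular f^[4](2178) = 2178. -/
lemma rev2178 : rev 2178 = 8712 := by simp [rev]; norm_num [Nat.ofDigits]

lemma rev6534 : rev 6534 = 4356 := by simp [rev]; norm_num [Nat.ofDigits]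

theorem cycle_2178 :
    f 2178 = -6534 ∧ f (-6534) = -2178 ∧ f (-2178) = 6534 ∧ f 6534 = 2178 ∧
    f^[4] 2178 = 2178 := by
  have h1 : f 2178 = -6534 := by
    have ht : ((2178:ℤ)).toNat = 2178 := rfl
    rw [f, reflect, if_pos (by norm_num), ht, rev2178]; norm_num
  have h2 : f (-6534) = -2178 := by
    have ht : (-(-6534:ℤ)).toNat = 6534 := rfl
    rw [f, reflect, if_neg (by norm_num), ht, rev6534]; norm_num
  have h3 : f (-2178) = 6534 := by
    have ht : (-(-2178:ℤ)).toNat = 2178 := rfl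
    rw [f, reflect, if_neg (by norm_num), ht, rev2178]; norm_num
  have h4 : f 6534 = 2178 := by
    have ht : ((6534:ℤ)).toNat = 6534 := rfl
    rw [f, reflect, if_pos (by norm_num), ht, rev6534]; norm_num
  refine ⟨h1, h2, h3, h4, ?_⟩
  rw [show (4:ℕ) = 3+1 by norm_num, Function.iterate_succ_apply, h1,
      show (3:ℕ) = 2+1 by norm_num, Function.iterate_succ_apply, h2,
      show (2:ℕ) = 1+1 by norm_num, Function.iterate_succ_apply, h3,
      Function.iterate_one, h4]
end

section
/- Every four-digit positive integer n (1000 ≤ n ≤ 9999) whose reflective sequence enters the cycle {2178, -6534, -2178, 6534} (i.e., for which there exists k with f^[k](n) = 2178) is divisible by 11. -/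
/-- rev is bounded by the same power of 10. -/
lemma rev_lt_pow (m k : ℕ) (h : m < 10 ^ k) : rev m < 10 ^ k := by
  have hlen : (Nat.digits 10 m).length ≤ k := by
    rcases Nat.eq_zero_or_pos m with rfl | hm
    · simp
    · rw [Nat.digits_len 10 m (by norm_num) hm.ne']
      have : Nat.log 10 m < k := Nat.log_lt_of_lt_pow hm.ne' h
      omega
  have h1 : rev m < 10 ^ (Nat.digits 10 m).reverse.length := by
    apply Nat.ofDigits_lt_base_pow_length (by norm_num)
    intro x hx
    exact Nat.digits_lt_base (by norm_num) (List.mem_reverse.mp hx)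
  calc rev m < 10 ^ (Nat.digits 10 m).reverse.length := h1
    _ ≤ 10 ^ k := Nat.pow_le_pow_right (by norm_num) (by simpa using hlen)

lemma rev_lt_9999 {m : ℕ} (h : m < 10000) : rev m < 10000 := by
  have := rev_lt_pow m 4 (by norm_num; omega)
  norm_num at this; omega

lemma rev_lt_999 {m : ℕ} (h : m < 1000) : rev m < 1000 := by
  have := rev_lt_pow m 3 (by norm_num; omega)
  norm_num at this; omega

lemma f_bound4 (a : ℤ) (h1 : -9999 ≤ a) (h2 : a ≤ 9999) : -9999 ≤ f a ∧ f a ≤ 9999 := by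
  unfold f reflect
  split_ifs with h
  · have hr := rev_lt_9999 (m := a.toNat) (by omega)
    omega
  · have hr := rev_lt_9999 (m := (-a).toNat) (by omega)
    omega

lemma f_bound3 (a : ℤ) (h1 : -999 ≤ a) (h2 : a ≤ 999) : -999 ≤ f a ∧ f a ≤ 999 := by
  unfold f reflect
  split_ifs with h
  · have hr := rev_lt_999 (m := a.toNat) (by omega)
    omega
  · have hr := rev_lt_999 (m := (-a).toNat) (by omega)
    omega

/-- once small (≤ 999 in absolute value), stays small forever. -/
lemma stays_small (j : ℕ) (a : ℤ) (h1 : -999 ≤ a) (h2 : a ≤ 999) :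
    -999 ≤ f^[j] a ∧ f^[j] a ≤ 999 := by
  induction j generalizing a with
  | zero => exact ⟨h1, h2⟩
  | succ j ih =>
    rw [Function.iterate_succ_apply]
    have hb := f_bound3 a h1 h2
    exact ih (f a) hb.1 hb.2

/-- for a four-digit number, 11 divides m + rev m. -/
lemma eleven_dvd_add_rev (m : ℕ) (h1 : 1000 ≤ m) (h2 : m ≤ 9999) :
    (11 : ℕ) ∣ m + rev m := by
  have hlen : (Nat.digits 10 m).length = 4 := by
    rw [Nat.digits_len 10 m (by norm_num) (by omega)]
    have hlog : Nat.log 10 m = 3 := by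
      apply Nat.log_eq_of_pow_le_of_lt_pow <;> norm_num <;> omega
    omega
  obtain ⟨a, b, c, d, hL⟩ : ∃ a b c d, Nat.digits 10 m = [a, b, c, d] := by
    rcases hl : Nat.digits 10 m with _ | ⟨a, _ | ⟨b, _ | ⟨c, _ | ⟨d, _ | ⟨e, t⟩⟩⟩⟩⟩ <;>
      rw [hl] at hlen <;> simp at hlen
    exact ⟨a, b, c, d, rfl⟩
  have hm : m = Nat.ofDigits 10 (Nat.digits 10 m) := (Nat.ofDigits_digits 10 m).symm
  rw [hL] at hm
  have hr : rev m = Nat.ofDigits 10 [d, c, b, a] := by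
    unfold rev; rw [hL]; rfl
  simp [Nat.ofDigits] at hm hr
  refine ⟨91 * (a + d) + 10 * (b + c), ?_⟩
  omega

/-- key divisibility transfer for four-digit values. -/
lemma dvd_back (a : ℤ) (h1 : 1000 ≤ a ∨ a ≤ -1000) (h2 : -9999 ≤ a) (h3 : a ≤ 9999)
    (hd : (11 : ℤ) ∣ f a) : (11 : ℤ) ∣ a := by
  unfold f reflect at hd
  split_ifs at hd with h
  · set m := a.toNat with hm
    have ha : a = (m : ℤ) := by omega
    have hmb : 1000 ≤ m ∧ m ≤ 9999 := by omega
    have hsum : (11 : ℤ) ∣ ((m : ℤ) + (rev m : ℤ)) := by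
      exact_mod_cast Int.natCast_dvd_natCast.mpr (eleven_dvd_add_rev m hmb.1 hmb.2)
    rw [ha] at hd ⊢
    omega
  · push_neg at h
    set m := (-a).toNat with hm
    have ha : a = -(m : ℤ) := by omega
    have hmb : 1000 ≤ m ∧ m ≤ 9999 := by omega
    have hsum : (11 : ℤ) ∣ ((m : ℤ) + (rev m : ℤ)) := by
      exact_mod_cast Int.natCast_dvd_natCast.mpr (eleven_dvd_add_rev m hmb.1 hmb.2)
    rw [ha] at hd ⊢
    omega

lemma main_aux : ∀ (k : ℕ) (a : ℤ), -9999 ≤ a → a ≤ 9999 → (1000 ≤ a ∨ a ≤ -1000) →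
    f^[k] a = 2178 → (11 : ℤ) ∣ a := by
  intro k
  induction k with
  | zero => intro a _ _ _ h; simp at h; omega
  | succ k ih =>
    intro a hlo hhi hbig hit
    rw [Function.iterate_succ_apply] at hit
    have hb := f_bound4 a hlo hhi
    by_cases hsmall : -999 ≤ f a ∧ f a ≤ 999
    · have := stays_small k (f a) hsmall.1 hsmall.2
      omega
    · have hbig' : 1000 ≤ f a ∨ f a ≤ -1000 := by omega
      exact dvd_back a hbig hlo hhi (ih (f a) hb.1 hb.2 hbig' hit)

theorem four_digit_cycle_div_eleven (n : ℤ) (h1 : 1000 ≤ n) (h2 : n ≤ 9999)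
    (hc : ∃ k : ℕ, f^[k] n = 2178) : (11 : ℤ) ∣ n := by
  obtain ⟨k, hk⟩ := hc
  exact main_aux k n (by omega) h2 (Or.inl h1) hk
end

section
/- For every five-digit positive integer n (10000 ≤ n ≤ 99999), there exists k such that f^[k](n) equals 0, 2178, or 21978; that is, every five-digit number reaches the zero limit, the 4-digit cycle of the pairs ±2178, ±6534, or the 5-digit cycle of the pairs ±21978, ±65934. -/
def Reach (a : ℤ) : Prop := ∃ k : ℕ, f^[k] a = 0 ∨ f^[k] a = 2178 ∨ f^[k] a = 21978

lemma reach_step {a b : ℤ} (h : f a = b) (hb : Reach b) : Reach a := by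
  obtain ⟨k, hk⟩ := hb
  exact ⟨k+1, by rw [Function.iterate_succ_apply, h]; exact hk⟩

lemma r_0 : Reach 0 := ⟨0, Or.inl rfl⟩
lemma r_2178 : Reach 2178 := ⟨0, Or.inr (Or.inl rfl)⟩
lemma r_21978 : Reach 21978 := ⟨0, Or.inr (Or.inr rfl)⟩

lemma r_65934 : Reach (65934) := by
  have h1 : rev 65934 = 43956 := by norm_num [rev, Nat.ofDigits]
  have h2 : ((65934:ℤ)).toNat = 65934 := rfl
  have hs : f (65934) = (21978) := by norm_num [f, reflect, h2, h1]
  exact reach_step hs r_21978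

lemma r_m21978 : Reach (-21978) := by
  have h1 : rev 21978 = 87912 := by norm_num [rev, Nat.ofDigits]
  have h2 : ((21978:ℤ)).toNat = 21978 := rfl
  have hs : f (-21978) = (65934) := by norm_num [f, reflect, h2, h1]
  exact reach_step hs r_65934

lemma r_m65934 : Reach (-65934) := by
  have h1 : rev 65934 = 43956 := by norm_num [rev, Nat.ofDigits]
  have h2 : ((65934:ℤ)).toNat = 65934 := rfl
  have hs : f (-65934) = (-21978) := by norm_num [f, reflect, h2, h1]
  exact reach_step hs r_m21978

lemma r_m87912 : Reach (-87912) := by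
  have h1 : rev 87912 = 21978 := by norm_num [rev, Nat.ofDigits]
  have h2 : ((87912:ℤ)).toNat = 87912 := rfl
  have hs : f (-87912) = (-65934) := by norm_num [f, reflect, h2, h1]
  exact reach_step hs r_m65934

lemma r_m98901 : Reach (-98901) := by
  have h1 : rev 98901 = 10989 := by norm_num [rev, Nat.ofDigits]
  have h2 : ((98901:ℤ)).toNat = 98901 := rfl
  have hs : f (-98901) = (-87912) := by norm_num [f, reflect, h2, h1]
  exact reach_step hs r_m87912

lemma r_m9999 : Reach (-9999) := by
  have h1 : rev 9999 = 9999 := by norm_num [rev, Nat.ofDigits]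
  have h2 : ((9999:ℤ)).toNat = 9999 := rfl
  have hs : f (-9999) = (0) := by norm_num [f, reflect, h2, h1]
  exact reach_step hs r_0

lemma r_49995 : Reach (49995) := by
  have h1 : rev 49995 = 59994 := by norm_num [rev, Nat.ofDigits]
  have h2 : ((49995:ℤ)).toNat = 49995 := rfl
  have hs : f (49995) = (-9999) := by norm_num [f, reflect, h2, h1]
  exact reach_step hs r_m9999

lemma r_m29997 : Reach (-29997) := by
  have h1 : rev 29997 = 79992 := by norm_num [rev, Nat.ofDigits]
  have h2 : ((29997:ℤ)).toNat = 29997 := rfl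
  have hs : f (-29997) = (49995) := by norm_num [f, reflect, h2, h1]
  exact reach_step hs r_49995

lemma r_39996 : Reach (39996) := by
  have h1 : rev 39996 = 69993 := by norm_num [rev, Nat.ofDigits]
  have h2 : ((39996:ℤ)).toNat = 39996 := rfl
  have hs : f (39996) = (-29997) := by norm_num [f, reflect, h2, h1]
  exact reach_step hs r_m29997

lemma r_m34947 : Reach (-34947) := by
  have h1 : rev 34947 = 74943 := by norm_num [rev, Nat.ofDigits]
  have h2 : ((34947:ℤ)).toNat = 34947 := rfl
  have hs : f (-34947) = (39996) := by norm_num [f, reflect, h2, h1]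
  exact reach_step hs r_39996

lemma r_32076 : Reach (32076) := by
  have h1 : rev 32076 = 67023 := by norm_num [rev, Nat.ofDigits]
  have h2 : ((32076:ℤ)).toNat = 32076 := rfl
  have hs : f (32076) = (-34947) := by norm_num [f, reflect, h2, h1]
  exact reach_step hs r_m34947

lemma r_70983 : Reach (70983) := by
  have h1 : rev 70983 = 38907 := by norm_num [rev, Nat.ofDigits]
  have h2 : ((70983:ℤ)).toNat = 70983 := rfl
  have hs : f (70983) = (32076) := by norm_num [f, reflect, h2, h1]
  exact reach_step hs r_32076

lemma r_m14058 : Reach (-14058) := by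
  have h1 : rev 14058 = 85041 := by norm_num [rev, Nat.ofDigits]
  have h2 : ((14058:ℤ)).toNat = 14058 := rfl
  have hs : f (-14058) = (70983) := by norm_num [f, reflect, h2, h1]
  exact reach_step hs r_70983

lemma r_m61974 : Reach (-61974) := by
  have h1 : rev 61974 = 47916 := by norm_num [rev, Nat.ofDigits]
  have h2 : ((61974:ℤ)).toNat = 61974 := rfl
  have hs : f (-61974) = (-14058) := by norm_num [f, reflect, h2, h1]
  exact reach_step hs r_m14058

lemma r_m85932 : Reach (-85932) := by
  have h1 : rev 85932 = 23958 := by norm_num [rev, Nat.ofDigits]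
  have h2 : ((85932:ℤ)).toNat = 85932 := rfl
  have hs : f (-85932) = (-61974) := by norm_num [f, reflect, h2, h1]
  exact reach_step hs r_m61974

lemma r_m97911 : Reach (-97911) := by
  have h1 : rev 97911 = 11979 := by norm_num [rev, Nat.ofDigits]
  have h2 : ((97911:ℤ)).toNat = 97911 := rfl
  have hs : f (-97911) = (-85932) := by norm_num [f, reflect, h2, h1]
  exact reach_step hs r_m85932

lemma r_6534 : Reach (6534) := by
  have h1 : rev 6534 = 4356 := by norm_num [rev, Nat.ofDigits]
  have h2 : ((6534:ℤ)).toNat = 6534 := rfl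
  have hs : f (6534) = (2178) := by norm_num [f, reflect, h2, h1]
  exact reach_step hs r_2178

lemma r_m2178 : Reach (-2178) := by
  have h1 : rev 2178 = 8712 := by norm_num [rev, Nat.ofDigits]
  have h2 : ((2178:ℤ)).toNat = 2178 := rfl
  have hs : f (-2178) = (6534) := by norm_num [f, reflect, h2, h1]
  exact reach_step hs r_6534

lemma r_4356 : Reach (4356) := by
  have h1 : rev 4356 = 6534 := by norm_num [rev, Nat.ofDigits]
  have h2 : ((4356:ℤ)).toNat = 4356 := rfl
  have hs : f (4356) = (-2178) := by norm_num [f, reflect, h2, h1]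
  exact reach_step hs r_m2178

lemma r_m3267 : Reach (-3267) := by
  have h1 : rev 3267 = 7623 := by norm_num [rev, Nat.ofDigits]
  have h2 : ((3267:ℤ)).toNat = 3267 := rfl
  have hs : f (-3267) = (4356) := by norm_num [f, reflect, h2, h1]
  exact reach_step hs r_4356

lemma r_m3960 : Reach (-3960) := by
  have h1 : rev 3960 = 693 := by norm_num [rev, Nat.ofDigits]
  have h2 : ((3960:ℤ)).toNat = 3960 := rfl
  have hs : f (-3960) = (-3267) := by norm_num [f, reflect, h2, h1]
  exact reach_step hs r_m3267

lemma r_52965 : Reach (52965) := by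
  have h1 : rev 52965 = 56925 := by norm_num [rev, Nat.ofDigits]
  have h2 : ((52965:ℤ)).toNat = 52965 := rfl
  have hs : f (52965) = (-3960) := by norm_num [f, reflect, h2, h1]
  exact reach_step hs r_m3960

lemma r_76032 : Reach (76032) := by
  have h1 : rev 76032 = 23067 := by norm_num [rev, Nat.ofDigits]
  have h2 : ((76032:ℤ)).toNat = 76032 := rfl
  have hs : f (76032) = (52965) := by norm_num [f, reflect, h2, h1]
  exact reach_step hs r_52965

lemma r_m16929 : Reach (-16929) := by
  have h1 : rev 16929 = 92961 := by norm_num [rev, Nat.ofDigits]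
  have h2 : ((16929:ℤ)).toNat = 16929 := rfl
  have hs : f (-16929) = (76032) := by norm_num [f, reflect, h2, h1]
  exact reach_step hs r_76032

lemma r_m58014 : Reach (-58014) := by
  have h1 : rev 58014 = 41085 := by norm_num [rev, Nat.ofDigits]
  have h2 : ((58014:ℤ)).toNat = 58014 := rfl
  have hs : f (-58014) = (-16929) := by norm_num [f, reflect, h2, h1]
  exact reach_step hs r_m16929

lemma r_m83952 : Reach (-83952) := by
  have h1 : rev 83952 = 25938 := by norm_num [rev, Nat.ofDigits]
  have h2 : ((83952:ℤ)).toNat = 83952 := rfl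
  have hs : f (-83952) = (-58014) := by norm_num [f, reflect, h2, h1]
  exact reach_step hs r_m58014

lemma r_m96921 : Reach (-96921) := by
  have h1 : rev 96921 = 12969 := by norm_num [rev, Nat.ofDigits]
  have h2 : ((96921:ℤ)).toNat = 96921 := rfl
  have hs : f (-96921) = (-83952) := by norm_num [f, reflect, h2, h1]
  exact reach_step hs r_m83952

lemma r_m9009 : Reach (-9009) := by
  have h1 : rev 9009 = 9009 := by norm_num [rev, Nat.ofDigits]
  have h2 : ((9009:ℤ)).toNat = 9009 := rfl
  have hs : f (-9009) = (0) := by norm_num [f, reflect, h2, h1]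
  exact reach_step hs r_0

lemma r_m54054 : Reach (-54054) := by
  have h1 : rev 54054 = 45045 := by norm_num [rev, Nat.ofDigits]
  have h2 : ((54054:ℤ)).toNat = 54054 := rfl
  have hs : f (-54054) = (-9009) := by norm_num [f, reflect, h2, h1]
  exact reach_step hs r_m9009

lemma r_m81972 : Reach (-81972) := by
  have h1 : rev 81972 = 27918 := by norm_num [rev, Nat.ofDigits]
  have h2 : ((81972:ℤ)).toNat = 81972 := rfl
  have hs : f (-81972) = (-54054) := by norm_num [f, reflect, h2, h1]
  exact reach_step hs r_m54054

lemma r_m95931 : Reach (-95931) := by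
  have h1 : rev 95931 = 13959 := by norm_num [rev, Nat.ofDigits]
  have h2 : ((95931:ℤ)).toNat = 95931 := rfl
  have hs : f (-95931) = (-81972) := by norm_num [f, reflect, h2, h1]
  exact reach_step hs r_m81972

lemma r_9999 : Reach (9999) := by
  have h1 : rev 9999 = 9999 := by norm_num [rev, Nat.ofDigits]
  have h2 : ((9999:ℤ)).toNat = 9999 := rfl
  have hs : f (9999) = (0) := by norm_num [f, reflect, h2, h1]
  exact reach_step hs r_0

lemma r_m49995 : Reach (-49995) := by
  have h1 : rev 49995 = 59994 := by norm_num [rev, Nat.ofDigits]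
  have h2 : ((49995:ℤ)).toNat = 49995 := rfl
  have hs : f (-49995) = (9999) := by norm_num [f, reflect, h2, h1]
  exact reach_step hs r_9999

lemma r_m79992 : Reach (-79992) := by
  have h1 : rev 79992 = 29997 := by norm_num [rev, Nat.ofDigits]
  have h2 : ((79992:ℤ)).toNat = 79992 := rfl
  have hs : f (-79992) = (-49995) := by norm_num [f, reflect, h2, h1]
  exact reach_step hs r_m49995

lemma r_m94941 : Reach (-94941) := by
  have h1 : rev 94941 = 14949 := by norm_num [rev, Nat.ofDigits]
  have h2 : ((94941:ℤ)).toNat = 94941 := rfl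
  have hs : f (-94941) = (-79992) := by norm_num [f, reflect, h2, h1]
  exact reach_step hs r_m79992

lemma r_m56925 : Reach (-56925) := by
  have h1 : rev 56925 = 52965 := by norm_num [rev, Nat.ofDigits]
  have h2 : ((56925:ℤ)).toNat = 56925 := rfl
  have hs : f (-56925) = (-3960) := by norm_num [f, reflect, h2, h1]
  exact reach_step hs r_m3960

lemma r_m78012 : Reach (-78012) := by
  have h1 : rev 78012 = 21087 := by norm_num [rev, Nat.ofDigits]
  have h2 : ((78012:ℤ)).toNat = 78012 := rfl
  have hs : f (-78012) = (-56925) := by norm_num [f, reflect, h2, h1]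
  exact reach_step hs r_m56925

lemma r_m93951 : Reach (-93951) := by
  have h1 : rev 93951 = 15939 := by norm_num [rev, Nat.ofDigits]
  have h2 : ((93951:ℤ)).toNat = 93951 := rfl
  have hs : f (-93951) = (-78012) := by norm_num [f, reflect, h2, h1]
  exact reach_step hs r_m78012

lemma r_m4356 : Reach (-4356) := by
  have h1 : rev 4356 = 6534 := by norm_num [rev, Nat.ofDigits]
  have h2 : ((4356:ℤ)).toNat = 4356 := rfl
  have hs : f (-4356) = (2178) := by norm_num [f, reflect, h2, h1]
  exact reach_step hs r_2178

lemma r_3267 : Reach (3267) := by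
  have h1 : rev 3267 = 7623 := by norm_num [rev, Nat.ofDigits]
  have h2 : ((3267:ℤ)).toNat = 3267 := rfl
  have hs : f (3267) = (-4356) := by norm_num [f, reflect, h2, h1]
  exact reach_step hs r_m4356

lemma r_3960 : Reach (3960) := by
  have h1 : rev 3960 = 693 := by norm_num [rev, Nat.ofDigits]
  have h2 : ((3960:ℤ)).toNat = 3960 := rfl
  have hs : f (3960) = (3267) := by norm_num [f, reflect, h2, h1]
  exact reach_step hs r_3267

lemma r_m52965 : Reach (-52965) := by
  have h1 : rev 52965 = 56925 := by norm_num [rev, Nat.ofDigits]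
  have h2 : ((52965:ℤ)).toNat = 52965 := rfl
  have hs : f (-52965) = (3960) := by norm_num [f, reflect, h2, h1]
  exact reach_step hs r_3960

lemma r_m76032 : Reach (-76032) := by
  have h1 : rev 76032 = 23067 := by norm_num [rev, Nat.ofDigits]
  have h2 : ((76032:ℤ)).toNat = 76032 := rfl
  have hs : f (-76032) = (-52965) := by norm_num [f, reflect, h2, h1]
  exact reach_step hs r_m52965

lemma r_m92961 : Reach (-92961) := by
  have h1 : rev 92961 = 16929 := by norm_num [rev, Nat.ofDigits]
  have h2 : ((92961:ℤ)).toNat = 92961 := rfl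
  have hs : f (-92961) = (-76032) := by norm_num [f, reflect, h2, h1]
  exact reach_step hs r_m76032

lemma r_m6534 : Reach (-6534) := by
  have h1 : rev 6534 = 4356 := by norm_num [rev, Nat.ofDigits]
  have h2 : ((6534:ℤ)).toNat = 6534 := rfl
  have hs : f (-6534) = (-2178) := by norm_num [f, reflect, h2, h1]
  exact reach_step hs r_m2178

lemma r_m8712 : Reach (-8712) := by
  have h1 : rev 8712 = 2178 := by norm_num [rev, Nat.ofDigits]
  have h2 : ((8712:ℤ)).toNat = 8712 := rfl
  have hs : f (-8712) = (-6534) := by norm_num [f, reflect, h2, h1]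
  exact reach_step hs r_m6534

lemma r_1089 : Reach (1089) := by
  have h1 : rev 1089 = 9801 := by norm_num [rev, Nat.ofDigits]
  have h2 : ((1089:ℤ)).toNat = 1089 := rfl
  have hs : f (1089) = (-8712) := by norm_num [f, reflect, h2, h1]
  exact reach_step hs r_m8712

lemma r_m49005 : Reach (-49005) := by
  have h1 : rev 49005 = 50094 := by norm_num [rev, Nat.ofDigits]
  have h2 : ((49005:ℤ)).toNat = 49005 := rfl
  have hs : f (-49005) = (1089) := by norm_num [f, reflect, h2, h1]
  exact reach_step hs r_1089

lemma r_m74052 : Reach (-74052) := by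
  have h1 : rev 74052 = 25047 := by norm_num [rev, Nat.ofDigits]
  have h2 : ((74052:ℤ)).toNat = 74052 := rfl
  have hs : f (-74052) = (-49005) := by norm_num [f, reflect, h2, h1]
  exact reach_step hs r_m49005

lemma r_m91971 : Reach (-91971) := by
  have h1 : rev 91971 = 17919 := by norm_num [rev, Nat.ofDigits]
  have h2 : ((91971:ℤ)).toNat = 91971 := rfl
  have hs : f (-91971) = (-74052) := by norm_num [f, reflect, h2, h1]
  exact reach_step hs r_m74052

lemma r_9009 : Reach (9009) := by
  have h1 : rev 9009 = 9009 := by norm_num [rev, Nat.ofDigits]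
  have h2 : ((9009:ℤ)).toNat = 9009 := rfl
  have hs : f (9009) = (0) := by norm_num [f, reflect, h2, h1]
  exact reach_step hs r_0

lemma r_m45045 : Reach (-45045) := by
  have h1 : rev 45045 = 54054 := by norm_num [rev, Nat.ofDigits]
  have h2 : ((45045:ℤ)).toNat = 45045 := rfl
  have hs : f (-45045) = (9009) := by norm_num [f, reflect, h2, h1]
  exact reach_step hs r_9009

lemma r_m72072 : Reach (-72072) := by
  have h1 : rev 72072 = 27027 := by norm_num [rev, Nat.ofDigits]
  have h2 : ((72072:ℤ)).toNat = 72072 := rfl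
  have hs : f (-72072) = (-45045) := by norm_num [f, reflect, h2, h1]
  exact reach_step hs r_m45045

lemma r_m90981 : Reach (-90981) := by
  have h1 : rev 90981 = 18909 := by norm_num [rev, Nat.ofDigits]
  have h2 : ((90981:ℤ)).toNat = 90981 := rfl
  have hs : f (-90981) = (-72072) := by norm_num [f, reflect, h2, h1]
  exact reach_step hs r_m72072

lemma r_m69993 : Reach (-69993) := by
  have h1 : rev 69993 = 39996 := by norm_num [rev, Nat.ofDigits]
  have h2 : ((69993:ℤ)).toNat = 69993 := rfl
  have hs : f (-69993) = (-29997) := by norm_num [f, reflect, h2, h1]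
  exact reach_step hs r_m29997

lemma r_m89991 : Reach (-89991) := by
  have h1 : rev 89991 = 19998 := by norm_num [rev, Nat.ofDigits]
  have h2 : ((89991:ℤ)).toNat = 89991 := rfl
  have hs : f (-89991) = (-69993) := by norm_num [f, reflect, h2, h1]
  exact reach_step hs r_m69993

lemma r_29997 : Reach (29997) := by
  have h1 : rev 29997 = 79992 := by norm_num [rev, Nat.ofDigits]
  have h2 : ((29997:ℤ)).toNat = 29997 := rfl
  have hs : f (29997) = (-49995) := by norm_num [f, reflect, h2, h1]
  exact reach_step hs r_m49995

lemma r_m39996 : Reach (-39996) := by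
  have h1 : rev 39996 = 69993 := by norm_num [rev, Nat.ofDigits]
  have h2 : ((39996:ℤ)).toNat = 39996 := rfl
  have hs : f (-39996) = (29997) := by norm_num [f, reflect, h2, h1]
  exact reach_step hs r_29997

lemma r_34947 : Reach (34947) := by
  have h1 : rev 34947 = 74943 := by norm_num [rev, Nat.ofDigits]
  have h2 : ((34947:ℤ)).toNat = 34947 := rfl
  have hs : f (34947) = (-39996) := by norm_num [f, reflect, h2, h1]
  exact reach_step hs r_m39996

lemma r_m32076 : Reach (-32076) := by
  have h1 : rev 32076 = 67023 := by norm_num [rev, Nat.ofDigits]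
  have h2 : ((32076:ℤ)).toNat = 32076 := rfl
  have hs : f (-32076) = (34947) := by norm_num [f, reflect, h2, h1]
  exact reach_step hs r_34947

lemma r_m70983 : Reach (-70983) := by
  have h1 : rev 70983 = 38907 := by norm_num [rev, Nat.ofDigits]
  have h2 : ((70983:ℤ)).toNat = 70983 := rfl
  have hs : f (-70983) = (-32076) := by norm_num [f, reflect, h2, h1]
  exact reach_step hs r_m32076

lemma r_14058 : Reach (14058) := by
  have h1 : rev 14058 = 85041 := by norm_num [rev, Nat.ofDigits]
  have h2 : ((14058:ℤ)).toNat = 14058 := rfl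
  have hs : f (14058) = (-70983) := by norm_num [f, reflect, h2, h1]
  exact reach_step hs r_m70983

lemma r_m47916 : Reach (-47916) := by
  have h1 : rev 47916 = 61974 := by norm_num [rev, Nat.ofDigits]
  have h2 : ((47916:ℤ)).toNat = 47916 := rfl
  have hs : f (-47916) = (14058) := by norm_num [f, reflect, h2, h1]
  exact reach_step hs r_14058

lemma r_m78903 : Reach (-78903) := by
  have h1 : rev 78903 = 30987 := by norm_num [rev, Nat.ofDigits]
  have h2 : ((78903:ℤ)).toNat = 78903 := rfl
  have hs : f (-78903) = (-47916) := by norm_num [f, reflect, h2, h1]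
  exact reach_step hs r_m47916

lemma r_m89001 : Reach (-89001) := by
  have h1 : rev 89001 = 10098 := by norm_num [rev, Nat.ofDigits]
  have h2 : ((89001:ℤ)).toNat = 89001 := rfl
  have hs : f (-89001) = (-78903) := by norm_num [f, reflect, h2, h1]
  exact reach_step hs r_m78903

lemma r_16929 : Reach (16929) := by
  have h1 : rev 16929 = 92961 := by norm_num [rev, Nat.ofDigits]
  have h2 : ((16929:ℤ)).toNat = 16929 := rfl
  have hs : f (16929) = (-76032) := by norm_num [f, reflect, h2, h1]
  exact reach_step hs r_m76032

lemma r_58014 : Reach (58014) := by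
  have h1 : rev 58014 = 41085 := by norm_num [rev, Nat.ofDigits]
  have h2 : ((58014:ℤ)).toNat = 58014 := rfl
  have hs : f (58014) = (16929) := by norm_num [f, reflect, h2, h1]
  exact reach_step hs r_16929

lemma r_m25938 : Reach (-25938) := by
  have h1 : rev 25938 = 83952 := by norm_num [rev, Nat.ofDigits]
  have h2 : ((25938:ℤ)).toNat = 25938 := rfl
  have hs : f (-25938) = (58014) := by norm_num [f, reflect, h2, h1]
  exact reach_step hs r_58014

lemma r_m67914 : Reach (-67914) := by
  have h1 : rev 67914 = 41976 := by norm_num [rev, Nat.ofDigits]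
  have h2 : ((67914:ℤ)).toNat = 67914 := rfl
  have hs : f (-67914) = (-25938) := by norm_num [f, reflect, h2, h1]
  exact reach_step hs r_m25938

lemma r_m88902 : Reach (-88902) := by
  have h1 : rev 88902 = 20988 := by norm_num [rev, Nat.ofDigits]
  have h2 : ((88902:ℤ)).toNat = 88902 := rfl
  have hs : f (-88902) = (-67914) := by norm_num [f, reflect, h2, h1]
  exact reach_step hs r_m67914

lemma r_m43956 : Reach (-43956) := by
  have h1 : rev 43956 = 65934 := by norm_num [rev, Nat.ofDigits]
  have h2 : ((43956:ℤ)).toNat = 43956 := rfl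
  have hs : f (-43956) = (21978) := by norm_num [f, reflect, h2, h1]
  exact reach_step hs r_21978

lemma r_m76923 : Reach (-76923) := by
  have h1 : rev 76923 = 32967 := by norm_num [rev, Nat.ofDigits]
  have h2 : ((76923:ℤ)).toNat = 76923 := rfl
  have hs : f (-76923) = (-43956) := by norm_num [f, reflect, h2, h1]
  exact reach_step hs r_m43956

lemma r_m88011 : Reach (-88011) := by
  have h1 : rev 88011 = 11088 := by norm_num [rev, Nat.ofDigits]
  have h2 : ((88011:ℤ)).toNat = 88011 := rfl
  have hs : f (-88011) = (-76923) := by norm_num [f, reflect, h2, h1]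
  exact reach_step hs r_m76923

lemma r_m74943 : Reach (-74943) := by
  have h1 : rev 74943 = 34947 := by norm_num [rev, Nat.ofDigits]
  have h2 : ((74943:ℤ)).toNat = 74943 := rfl
  have hs : f (-74943) = (-39996) := by norm_num [f, reflect, h2, h1]
  exact reach_step hs r_m39996

lemma r_m87021 : Reach (-87021) := by
  have h1 : rev 87021 = 12078 := by norm_num [rev, Nat.ofDigits]
  have h2 : ((87021:ℤ)).toNat = 87021 := rfl
  have hs : f (-87021) = (-74943) := by norm_num [f, reflect, h2, h1]
  exact reach_step hs r_m74943

lemma r_27027 : Reach (27027) := by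
  have h1 : rev 27027 = 72072 := by norm_num [rev, Nat.ofDigits]
  have h2 : ((27027:ℤ)).toNat = 27027 := rfl
  have hs : f (27027) = (-45045) := by norm_num [f, reflect, h2, h1]
  exact reach_step hs r_m45045

lemma r_63063 : Reach (63063) := by
  have h1 : rev 63063 = 36036 := by norm_num [rev, Nat.ofDigits]
  have h2 : ((63063:ℤ)).toNat = 63063 := rfl
  have hs : f (63063) = (27027) := by norm_num [f, reflect, h2, h1]
  exact reach_step hs r_27027

lemma r_m18018 : Reach (-18018) := by
  have h1 : rev 18018 = 81081 := by norm_num [rev, Nat.ofDigits]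
  have h2 : ((18018:ℤ)).toNat = 18018 := rfl
  have hs : f (-18018) = (63063) := by norm_num [f, reflect, h2, h1]
  exact reach_step hs r_63063

lemma r_m63954 : Reach (-63954) := by
  have h1 : rev 63954 = 45936 := by norm_num [rev, Nat.ofDigits]
  have h2 : ((63954:ℤ)).toNat = 63954 := rfl
  have hs : f (-63954) = (-18018) := by norm_num [f, reflect, h2, h1]
  exact reach_step hs r_m18018

lemma r_m86922 : Reach (-86922) := by
  have h1 : rev 86922 = 22968 := by norm_num [rev, Nat.ofDigits]
  have h2 : ((86922:ℤ)).toNat = 86922 := rfl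
  have hs : f (-86922) = (-63954) := by norm_num [f, reflect, h2, h1]
  exact reach_step hs r_m63954

lemma r_m36036 : Reach (-36036) := by
  have h1 : rev 36036 = 63063 := by norm_num [rev, Nat.ofDigits]
  have h2 : ((36036:ℤ)).toNat = 36036 := rfl
  have hs : f (-36036) = (27027) := by norm_num [f, reflect, h2, h1]
  exact reach_step hs r_27027

lemma r_m72963 : Reach (-72963) := by
  have h1 : rev 72963 = 36927 := by norm_num [rev, Nat.ofDigits]
  have h2 : ((72963:ℤ)).toNat = 72963 := rfl
  have hs : f (-72963) = (-36036) := by norm_num [f, reflect, h2, h1]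
  exact reach_step hs r_m36036

lemma r_m86031 : Reach (-86031) := by
  have h1 : rev 86031 = 13068 := by norm_num [rev, Nat.ofDigits]
  have h2 : ((86031:ℤ)).toNat = 86031 := rfl
  have hs : f (-86031) = (-72963) := by norm_num [f, reflect, h2, h1]
  exact reach_step hs r_m72963

lemma r_m85041 : Reach (-85041) := by
  have h1 : rev 85041 = 14058 := by norm_num [rev, Nat.ofDigits]
  have h2 : ((85041:ℤ)).toNat = 85041 := rfl
  have hs : f (-85041) = (-70983) := by norm_num [f, reflect, h2, h1]
  exact reach_step hs r_m70983

lemma r_m59994 : Reach (-59994) := by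
  have h1 : rev 59994 = 49995 := by norm_num [rev, Nat.ofDigits]
  have h2 : ((59994:ℤ)).toNat = 59994 := rfl
  have hs : f (-59994) = (-9999) := by norm_num [f, reflect, h2, h1]
  exact reach_step hs r_m9999

lemma r_m84942 : Reach (-84942) := by
  have h1 : rev 84942 = 24948 := by norm_num [rev, Nat.ofDigits]
  have h2 : ((84942:ℤ)).toNat = 84942 := rfl
  have hs : f (-84942) = (-59994) := by norm_num [f, reflect, h2, h1]
  exact reach_step hs r_m59994

lemma r_m38907 : Reach (-38907) := by
  have h1 : rev 38907 = 70983 := by norm_num [rev, Nat.ofDigits]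
  have h2 : ((38907:ℤ)).toNat = 38907 := rfl
  have hs : f (-38907) = (32076) := by norm_num [f, reflect, h2, h1]
  exact reach_step hs r_32076

lemma r_m69003 : Reach (-69003) := by
  have h1 : rev 69003 = 30096 := by norm_num [rev, Nat.ofDigits]
  have h2 : ((69003:ℤ)).toNat = 69003 := rfl
  have hs : f (-69003) = (-38907) := by norm_num [f, reflect, h2, h1]
  exact reach_step hs r_m38907

lemma r_m84051 : Reach (-84051) := by
  have h1 : rev 84051 = 15048 := by norm_num [rev, Nat.ofDigits]
  have h2 : ((84051:ℤ)).toNat = 84051 := rfl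
  have hs : f (-84051) = (-69003) := by norm_num [f, reflect, h2, h1]
  exact reach_step hs r_m69003

lemma r_m67023 : Reach (-67023) := by
  have h1 : rev 67023 = 32076 := by norm_num [rev, Nat.ofDigits]
  have h2 : ((67023:ℤ)).toNat = 67023 := rfl
  have hs : f (-67023) = (-34947) := by norm_num [f, reflect, h2, h1]
  exact reach_step hs r_m34947

lemma r_m83061 : Reach (-83061) := by
  have h1 : rev 83061 = 16038 := by norm_num [rev, Nat.ofDigits]
  have h2 : ((83061:ℤ)).toNat = 83061 := rfl
  have hs : f (-83061) = (-67023) := by norm_num [f, reflect, h2, h1]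
  exact reach_step hs r_m67023

lemma r_83952 : Reach (83952) := by
  have h1 : rev 83952 = 25938 := by norm_num [rev, Nat.ofDigits]
  have h2 : ((83952:ℤ)).toNat = 83952 := rfl
  have hs : f (83952) = (58014) := by norm_num [f, reflect, h2, h1]
  exact reach_step hs r_58014

lemma r_m12969 : Reach (-12969) := by
  have h1 : rev 12969 = 96921 := by norm_num [rev, Nat.ofDigits]
  have h2 : ((12969:ℤ)).toNat = 12969 := rfl
  have hs : f (-12969) = (83952) := by norm_num [f, reflect, h2, h1]
  exact reach_step hs r_83952

lemma r_m56034 : Reach (-56034) := by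
  have h1 : rev 56034 = 43065 := by norm_num [rev, Nat.ofDigits]
  have h2 : ((56034:ℤ)).toNat = 56034 := rfl
  have hs : f (-56034) = (-12969) := by norm_num [f, reflect, h2, h1]
  exact reach_step hs r_m12969

lemma r_m82962 : Reach (-82962) := by
  have h1 : rev 82962 = 26928 := by norm_num [rev, Nat.ofDigits]
  have h2 : ((82962:ℤ)).toNat = 82962 := rfl
  have hs : f (-82962) = (-56034) := by norm_num [f, reflect, h2, h1]
  exact reach_step hs r_m56034

lemma r_47916 : Reach (47916) := by
  have h1 : rev 47916 = 61974 := by norm_num [rev, Nat.ofDigits]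
  have h2 : ((47916:ℤ)).toNat = 47916 := rfl
  have hs : f (47916) = (-14058) := by norm_num [f, reflect, h2, h1]
  exact reach_step hs r_m14058

lemma r_m30987 : Reach (-30987) := by
  have h1 : rev 30987 = 78903 := by norm_num [rev, Nat.ofDigits]
  have h2 : ((30987:ℤ)).toNat = 30987 := rfl
  have hs : f (-30987) = (47916) := by norm_num [f, reflect, h2, h1]
  exact reach_step hs r_47916

lemma r_m65043 : Reach (-65043) := by
  have h1 : rev 65043 = 34056 := by norm_num [rev, Nat.ofDigits]
  have h2 : ((65043:ℤ)).toNat = 65043 := rfl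
  have hs : f (-65043) = (-30987) := by norm_num [f, reflect, h2, h1]
  exact reach_step hs r_m30987

lemma r_m82071 : Reach (-82071) := by
  have h1 : rev 82071 = 17028 := by norm_num [rev, Nat.ofDigits]
  have h2 : ((82071:ℤ)).toNat = 82071 := rfl
  have hs : f (-82071) = (-65043) := by norm_num [f, reflect, h2, h1]
  exact reach_step hs r_m65043

lemma r_45045 : Reach (45045) := by
  have h1 : rev 45045 = 54054 := by norm_num [rev, Nat.ofDigits]
  have h2 : ((45045:ℤ)).toNat = 45045 := rfl
  have hs : f (45045) = (-9009) := by norm_num [f, reflect, h2, h1]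
  exact reach_step hs r_m9009

lemma r_m27027 : Reach (-27027) := by
  have h1 : rev 27027 = 72072 := by norm_num [rev, Nat.ofDigits]
  have h2 : ((27027:ℤ)).toNat = 27027 := rfl
  have hs : f (-27027) = (45045) := by norm_num [f, reflect, h2, h1]
  exact reach_step hs r_45045

lemma r_m63063 : Reach (-63063) := by
  have h1 : rev 63063 = 36036 := by norm_num [rev, Nat.ofDigits]
  have h2 : ((63063:ℤ)).toNat = 63063 := rfl
  have hs : f (-63063) = (-27027) := by norm_num [f, reflect, h2, h1]
  exact reach_step hs r_m27027

lemma r_m81081 : Reach (-81081) := by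
  have h1 : rev 81081 = 18018 := by norm_num [rev, Nat.ofDigits]
  have h2 : ((81081:ℤ)).toNat = 81081 := rfl
  have hs : f (-81081) = (-63063) := by norm_num [f, reflect, h2, h1]
  exact reach_step hs r_m63063

lemma r_m5049 : Reach (-5049) := by
  have h1 : rev 5049 = 9405 := by norm_num [rev, Nat.ofDigits]
  have h2 : ((5049:ℤ)).toNat = 5049 := rfl
  have hs : f (-5049) = (4356) := by norm_num [f, reflect, h2, h1]
  exact reach_step hs r_4356

lemma r_m52074 : Reach (-52074) := by
  have h1 : rev 52074 = 47025 := by norm_num [rev, Nat.ofDigits]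
  have h2 : ((52074:ℤ)).toNat = 52074 := rfl
  have hs : f (-52074) = (-5049) := by norm_num [f, reflect, h2, h1]
  exact reach_step hs r_m5049

lemma r_m80982 : Reach (-80982) := by
  have h1 : rev 80982 = 28908 := by norm_num [rev, Nat.ofDigits]
  have h2 : ((80982:ℤ)).toNat = 80982 := rfl
  have hs : f (-80982) = (-52074) := by norm_num [f, reflect, h2, h1]
  exact reach_step hs r_m52074

lemma r_m7623 : Reach (-7623) := by
  have h1 : rev 7623 = 3267 := by norm_num [rev, Nat.ofDigits]
  have h2 : ((7623:ℤ)).toNat = 7623 := rfl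
  have hs : f (-7623) = (-4356) := by norm_num [f, reflect, h2, h1]
  exact reach_step hs r_m4356

lemma r_m7920 : Reach (-7920) := by
  have h1 : rev 7920 = 297 := by norm_num [rev, Nat.ofDigits]
  have h2 : ((7920:ℤ)).toNat = 7920 := rfl
  have hs : f (-7920) = (-7623) := by norm_num [f, reflect, h2, h1]
  exact reach_step hs r_m7623

lemma r_m58905 : Reach (-58905) := by
  have h1 : rev 58905 = 50985 := by norm_num [rev, Nat.ofDigits]
  have h2 : ((58905:ℤ)).toNat = 58905 := rfl
  have hs : f (-58905) = (-7920) := by norm_num [f, reflect, h2, h1]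
  exact reach_step hs r_m7920

lemma r_m79002 : Reach (-79002) := by
  have h1 : rev 79002 = 20097 := by norm_num [rev, Nat.ofDigits]
  have h2 : ((79002:ℤ)).toNat = 79002 := rfl
  have hs : f (-79002) = (-58905) := by norm_num [f, reflect, h2, h1]
  exact reach_step hs r_m58905

lemma r_18018 : Reach (18018) := by
  have h1 : rev 18018 = 81081 := by norm_num [rev, Nat.ofDigits]
  have h2 : ((18018:ℤ)).toNat = 18018 := rfl
  have hs : f (18018) = (-63063) := by norm_num [f, reflect, h2, h1]
  exact reach_step hs r_m63063

lemma r_m45936 : Reach (-45936) := by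
  have h1 : rev 45936 = 63954 := by norm_num [rev, Nat.ofDigits]
  have h2 : ((45936:ℤ)).toNat = 45936 := rfl
  have hs : f (-45936) = (18018) := by norm_num [f, reflect, h2, h1]
  exact reach_step hs r_18018

lemma r_m77913 : Reach (-77913) := by
  have h1 : rev 77913 = 31977 := by norm_num [rev, Nat.ofDigits]
  have h2 : ((77913:ℤ)).toNat = 77913 := rfl
  have hs : f (-77913) = (-45936) := by norm_num [f, reflect, h2, h1]
  exact reach_step hs r_m45936

lemma r_m54945 : Reach (-54945) := by
  have h1 : rev 54945 = 54945 := by norm_num [rev, Nat.ofDigits]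
  have h2 : ((54945:ℤ)).toNat = 54945 := rfl
  have hs : f (-54945) = (0) := by norm_num [f, reflect, h2, h1]
  exact reach_step hs r_0

lemma r_m77022 : Reach (-77022) := by
  have h1 : rev 77022 = 22077 := by norm_num [rev, Nat.ofDigits]
  have h2 : ((77022:ℤ)).toNat = 77022 := rfl
  have hs : f (-77022) = (-54945) := by norm_num [f, reflect, h2, h1]
  exact reach_step hs r_m54945

lemma r_25938 : Reach (25938) := by
  have h1 : rev 25938 = 83952 := by norm_num [rev, Nat.ofDigits]
  have h2 : ((25938:ℤ)).toNat = 25938 := rfl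
  have hs : f (25938) = (-58014) := by norm_num [f, reflect, h2, h1]
  exact reach_step hs r_m58014

lemma r_m41976 : Reach (-41976) := by
  have h1 : rev 41976 = 67914 := by norm_num [rev, Nat.ofDigits]
  have h2 : ((41976:ℤ)).toNat = 41976 := rfl
  have hs : f (-41976) = (25938) := by norm_num [f, reflect, h2, h1]
  exact reach_step hs r_25938

lemma r_m75933 : Reach (-75933) := by
  have h1 : rev 75933 = 33957 := by norm_num [rev, Nat.ofDigits]
  have h2 : ((75933:ℤ)).toNat = 75933 := rfl
  have hs : f (-75933) = (-41976) := by norm_num [f, reflect, h2, h1]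
  exact reach_step hs r_m41976

lemma r_7623 : Reach (7623) := by
  have h1 : rev 7623 = 3267 := by norm_num [rev, Nat.ofDigits]
  have h2 : ((7623:ℤ)).toNat = 7623 := rfl
  have hs : f (7623) = (4356) := by norm_num [f, reflect, h2, h1]
  exact reach_step hs r_4356

lemma r_7920 : Reach (7920) := by
  have h1 : rev 7920 = 297 := by norm_num [rev, Nat.ofDigits]
  have h2 : ((7920:ℤ)).toNat = 7920 := rfl
  have hs : f (7920) = (7623) := by norm_num [f, reflect, h2, h1]
  exact reach_step hs r_7623

lemma r_m50985 : Reach (-50985) := by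
  have h1 : rev 50985 = 58905 := by norm_num [rev, Nat.ofDigits]
  have h2 : ((50985:ℤ)).toNat = 50985 := rfl
  have hs : f (-50985) = (7920) := by norm_num [f, reflect, h2, h1]
  exact reach_step hs r_7920

lemma r_m75042 : Reach (-75042) := by
  have h1 : rev 75042 = 24057 := by norm_num [rev, Nat.ofDigits]
  have h2 : ((75042:ℤ)).toNat = 75042 := rfl
  have hs : f (-75042) = (-50985) := by norm_num [f, reflect, h2, h1]
  exact reach_step hs r_m50985

lemma r_23067 : Reach (23067) := by
  have h1 : rev 23067 = 76032 := by norm_num [rev, Nat.ofDigits]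
  have h2 : ((23067:ℤ)).toNat = 23067 := rfl
  have hs : f (23067) = (-52965) := by norm_num [f, reflect, h2, h1]
  exact reach_step hs r_m52965

lemma r_m38016 : Reach (-38016) := by
  have h1 : rev 38016 = 61083 := by norm_num [rev, Nat.ofDigits]
  have h2 : ((38016:ℤ)).toNat = 38016 := rfl
  have hs : f (-38016) = (23067) := by norm_num [f, reflect, h2, h1]
  exact reach_step hs r_23067

lemma r_m73953 : Reach (-73953) := by
  have h1 : rev 73953 = 35937 := by norm_num [rev, Nat.ofDigits]
  have h2 : ((73953:ℤ)).toNat = 73953 := rfl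
  have hs : f (-73953) = (-38016) := by norm_num [f, reflect, h2, h1]
  exact reach_step hs r_m38016

lemma r_5049 : Reach (5049) := by
  have h1 : rev 5049 = 9405 := by norm_num [rev, Nat.ofDigits]
  have h2 : ((5049:ℤ)).toNat = 5049 := rfl
  have hs : f (5049) = (-4356) := by norm_num [f, reflect, h2, h1]
  exact reach_step hs r_m4356

lemma r_m47025 : Reach (-47025) := by
  have h1 : rev 47025 = 52074 := by norm_num [rev, Nat.ofDigits]
  have h2 : ((47025:ℤ)).toNat = 47025 := rfl
  have hs : f (-47025) = (5049) := by norm_num [f, reflect, h2, h1]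
  exact reach_step hs r_5049

lemma r_m73062 : Reach (-73062) := by
  have h1 : rev 73062 = 26037 := by norm_num [rev, Nat.ofDigits]
  have h2 : ((73062:ℤ)).toNat = 73062 := rfl
  have hs : f (-73062) = (-47025) := by norm_num [f, reflect, h2, h1]
  exact reach_step hs r_m47025

lemma r_30987 : Reach (30987) := by
  have h1 : rev 30987 = 78903 := by norm_num [rev, Nat.ofDigits]
  have h2 : ((30987:ℤ)).toNat = 30987 := rfl
  have hs : f (30987) = (-47916) := by norm_num [f, reflect, h2, h1]
  exact reach_step hs r_m47916

lemma r_m34056 : Reach (-34056) := by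
  have h1 : rev 34056 = 65043 := by norm_num [rev, Nat.ofDigits]
  have h2 : ((34056:ℤ)).toNat = 34056 := rfl
  have hs : f (-34056) = (30987) := by norm_num [f, reflect, h2, h1]
  exact reach_step hs r_30987

lemma r_m71973 : Reach (-71973) := by
  have h1 : rev 71973 = 37917 := by norm_num [rev, Nat.ofDigits]
  have h2 : ((71973:ℤ)).toNat = 71973 := rfl
  have hs : f (-71973) = (-34056) := by norm_num [f, reflect, h2, h1]
  exact reach_step hs r_m34056

lemma r_12969 : Reach (12969) := by
  have h1 : rev 12969 = 96921 := by norm_num [rev, Nat.ofDigits]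
  have h2 : ((12969:ℤ)).toNat = 12969 := rfl
  have hs : f (12969) = (-83952) := by norm_num [f, reflect, h2, h1]
  exact reach_step hs r_m83952

lemma r_m43065 : Reach (-43065) := by
  have h1 : rev 43065 = 56034 := by norm_num [rev, Nat.ofDigits]
  have h2 : ((43065:ℤ)).toNat = 43065 := rfl
  have hs : f (-43065) = (12969) := by norm_num [f, reflect, h2, h1]
  exact reach_step hs r_12969

lemma r_m71082 : Reach (-71082) := by
  have h1 : rev 71082 = 28017 := by norm_num [rev, Nat.ofDigits]
  have h2 : ((71082:ℤ)).toNat = 71082 := rfl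
  have hs : f (-71082) = (-43065) := by norm_num [f, reflect, h2, h1]
  exact reach_step hs r_m43065

lemma r_54054 : Reach (54054) := by
  have h1 : rev 54054 = 45045 := by norm_num [rev, Nat.ofDigits]
  have h2 : ((54054:ℤ)).toNat = 54054 := rfl
  have hs : f (54054) = (9009) := by norm_num [f, reflect, h2, h1]
  exact reach_step hs r_9009

lemma r_m27918 : Reach (-27918) := by
  have h1 : rev 27918 = 81972 := by norm_num [rev, Nat.ofDigits]
  have h2 : ((27918:ℤ)).toNat = 27918 := rfl
  have hs : f (-27918) = (54054) := by norm_num [f, reflect, h2, h1]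
  exact reach_step hs r_54054

lemma r_m68904 : Reach (-68904) := by
  have h1 : rev 68904 = 40986 := by norm_num [rev, Nat.ofDigits]
  have h2 : ((68904:ℤ)).toNat = 68904 := rfl
  have hs : f (-68904) = (-27918) := by norm_num [f, reflect, h2, h1]
  exact reach_step hs r_m27918

lemma r_36036 : Reach (36036) := by
  have h1 : rev 36036 = 63063 := by norm_num [rev, Nat.ofDigits]
  have h2 : ((36036:ℤ)).toNat = 36036 := rfl
  have hs : f (36036) = (-27027) := by norm_num [f, reflect, h2, h1]
  exact reach_step hs r_m27027

lemma r_m36927 : Reach (-36927) := by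
  have h1 : rev 36927 = 72963 := by norm_num [rev, Nat.ofDigits]
  have h2 : ((36927:ℤ)).toNat = 36927 := rfl
  have hs : f (-36927) = (36036) := by norm_num [f, reflect, h2, h1]
  exact reach_step hs r_36036

lemma r_m68013 : Reach (-68013) := by
  have h1 : rev 68013 = 31086 := by norm_num [rev, Nat.ofDigits]
  have h2 : ((68013:ℤ)).toNat = 68013 := rfl
  have hs : f (-68013) = (-36927) := by norm_num [f, reflect, h2, h1]
  exact reach_step hs r_m36927

lemma r_61974 : Reach (61974) := by
  have h1 : rev 61974 = 47916 := by norm_num [rev, Nat.ofDigits]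
  have h2 : ((61974:ℤ)).toNat = 61974 := rfl
  have hs : f (61974) = (14058) := by norm_num [f, reflect, h2, h1]
  exact reach_step hs r_14058

lemma r_m23958 : Reach (-23958) := by
  have h1 : rev 23958 = 85932 := by norm_num [rev, Nat.ofDigits]
  have h2 : ((23958:ℤ)).toNat = 23958 := rfl
  have hs : f (-23958) = (61974) := by norm_num [f, reflect, h2, h1]
  exact reach_step hs r_61974

lemma r_m66924 : Reach (-66924) := by
  have h1 : rev 66924 = 42966 := by norm_num [rev, Nat.ofDigits]
  have h2 : ((66924:ℤ)).toNat = 66924 := rfl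
  have hs : f (-66924) = (-23958) := by norm_num [f, reflect, h2, h1]
  exact reach_step hs r_m23958

lemma r_43956 : Reach (43956) := by
  have h1 : rev 43956 = 65934 := by norm_num [rev, Nat.ofDigits]
  have h2 : ((43956:ℤ)).toNat = 43956 := rfl
  have hs : f (43956) = (-21978) := by norm_num [f, reflect, h2, h1]
  exact reach_step hs r_m21978

lemma r_m32967 : Reach (-32967) := by
  have h1 : rev 32967 = 76923 := by norm_num [rev, Nat.ofDigits]
  have h2 : ((32967:ℤ)).toNat = 32967 := rfl
  have hs : f (-32967) = (43956) := by norm_num [f, reflect, h2, h1]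
  exact reach_step hs r_43956

lemma r_m66033 : Reach (-66033) := by
  have h1 : rev 66033 = 33066 := by norm_num [rev, Nat.ofDigits]
  have h2 : ((66033:ℤ)).toNat = 66033 := rfl
  have hs : f (-66033) = (-32967) := by norm_num [f, reflect, h2, h1]
  exact reach_step hs r_m32967

lemma r_69993 : Reach (69993) := by
  have h1 : rev 69993 = 39996 := by norm_num [rev, Nat.ofDigits]
  have h2 : ((69993:ℤ)).toNat = 69993 := rfl
  have hs : f (69993) = (29997) := by norm_num [f, reflect, h2, h1]
  exact reach_step hs r_29997

lemma r_m19998 : Reach (-19998) := by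
  have h1 : rev 19998 = 89991 := by norm_num [rev, Nat.ofDigits]
  have h2 : ((19998:ℤ)).toNat = 19998 := rfl
  have hs : f (-19998) = (69993) := by norm_num [f, reflect, h2, h1]
  exact reach_step hs r_69993

lemma r_m64944 : Reach (-64944) := by
  have h1 : rev 64944 = 44946 := by norm_num [rev, Nat.ofDigits]
  have h2 : ((64944:ℤ)).toNat = 64944 := rfl
  have hs : f (-64944) = (-19998) := by norm_num [f, reflect, h2, h1]
  exact reach_step hs r_m19998

lemma r_41085 : Reach (41085) := by
  have h1 : rev 41085 = 58014 := by norm_num [rev, Nat.ofDigits]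
  have h2 : ((41085:ℤ)).toNat = 41085 := rfl
  have hs : f (41085) = (-16929) := by norm_num [f, reflect, h2, h1]
  exact reach_step hs r_m16929

lemma r_m29007 : Reach (-29007) := by
  have h1 : rev 29007 = 70092 := by norm_num [rev, Nat.ofDigits]
  have h2 : ((29007:ℤ)).toNat = 29007 := rfl
  have hs : f (-29007) = (41085) := by norm_num [f, reflect, h2, h1]
  exact reach_step hs r_41085

lemma r_m64053 : Reach (-64053) := by
  have h1 : rev 64053 = 35046 := by norm_num [rev, Nat.ofDigits]
  have h2 : ((64053:ℤ)).toNat = 64053 := rfl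
  have hs : f (-64053) = (-29007) := by norm_num [f, reflect, h2, h1]
  exact reach_step hs r_m29007

lemma r_67023 : Reach (67023) := by
  have h1 : rev 67023 = 32076 := by norm_num [rev, Nat.ofDigits]
  have h2 : ((67023:ℤ)).toNat = 67023 := rfl
  have hs : f (67023) = (34947) := by norm_num [f, reflect, h2, h1]
  exact reach_step hs r_34947

lemma r_m16038 : Reach (-16038) := by
  have h1 : rev 16038 = 83061 := by norm_num [rev, Nat.ofDigits]
  have h2 : ((16038:ℤ)).toNat = 16038 := rfl
  have hs : f (-16038) = (67023) := by norm_num [f, reflect, h2, h1]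
  exact reach_step hs r_67023

lemma r_m62964 : Reach (-62964) := by
  have h1 : rev 62964 = 46926 := by norm_num [rev, Nat.ofDigits]
  have h2 : ((62964:ℤ)).toNat = 62964 := rfl
  have hs : f (-62964) = (-16038) := by norm_num [f, reflect, h2, h1]
  exact reach_step hs r_m16038

lemma r_8712 : Reach (8712) := by
  have h1 : rev 8712 = 2178 := by norm_num [rev, Nat.ofDigits]
  have h2 : ((8712:ℤ)).toNat = 8712 := rfl
  have hs : f (8712) = (6534) := by norm_num [f, reflect, h2, h1]
  exact reach_step hs r_6534

lemma r_m1089 : Reach (-1089) := by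
  have h1 : rev 1089 = 9801 := by norm_num [rev, Nat.ofDigits]
  have h2 : ((1089:ℤ)).toNat = 1089 := rfl
  have hs : f (-1089) = (8712) := by norm_num [f, reflect, h2, h1]
  exact reach_step hs r_8712

lemma r_49005 : Reach (49005) := by
  have h1 : rev 49005 = 50094 := by norm_num [rev, Nat.ofDigits]
  have h2 : ((49005:ℤ)).toNat = 49005 := rfl
  have hs : f (49005) = (-1089) := by norm_num [f, reflect, h2, h1]
  exact reach_step hs r_m1089

lemma r_m25047 : Reach (-25047) := by
  have h1 : rev 25047 = 74052 := by norm_num [rev, Nat.ofDigits]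
  have h2 : ((25047:ℤ)).toNat = 25047 := rfl
  have hs : f (-25047) = (49005) := by norm_num [f, reflect, h2, h1]
  exact reach_step hs r_49005

lemma r_m62073 : Reach (-62073) := by
  have h1 : rev 62073 = 37026 := by norm_num [rev, Nat.ofDigits]
  have h2 : ((62073:ℤ)).toNat = 62073 := rfl
  have hs : f (-62073) = (-25047) := by norm_num [f, reflect, h2, h1]
  exact reach_step hs r_m25047

lemma r_m23067 : Reach (-23067) := by
  have h1 : rev 23067 = 76032 := by norm_num [rev, Nat.ofDigits]
  have h2 : ((23067:ℤ)).toNat = 23067 := rfl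
  have hs : f (-23067) = (52965) := by norm_num [f, reflect, h2, h1]
  exact reach_step hs r_52965

lemma r_m61083 : Reach (-61083) := by
  have h1 : rev 61083 = 38016 := by norm_num [rev, Nat.ofDigits]
  have h2 : ((61083:ℤ)).toNat = 61083 := rfl
  have hs : f (-61083) = (-23067) := by norm_num [f, reflect, h2, h1]
  exact reach_step hs r_m23067

lemma r_74943 : Reach (74943) := by
  have h1 : rev 74943 = 34947 := by norm_num [rev, Nat.ofDigits]
  have h2 : ((74943:ℤ)).toNat = 74943 := rfl
  have hs : f (74943) = (39996) := by norm_num [f, reflect, h2, h1]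
  exact reach_step hs r_39996

lemma r_m12078 : Reach (-12078) := by
  have h1 : rev 12078 = 87021 := by norm_num [rev, Nat.ofDigits]
  have h2 : ((12078:ℤ)).toNat = 12078 := rfl
  have hs : f (-12078) = (74943) := by norm_num [f, reflect, h2, h1]
  exact reach_step hs r_74943

lemma r_m60984 : Reach (-60984) := by
  have h1 : rev 60984 = 48906 := by norm_num [rev, Nat.ofDigits]
  have h2 : ((60984:ℤ)).toNat = 60984 := rfl
  have hs : f (-60984) = (-12078) := by norm_num [f, reflect, h2, h1]
  exact reach_step hs r_m12078

lemma r_72072 : Reach (72072) := by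
  have h1 : rev 72072 = 27027 := by norm_num [rev, Nat.ofDigits]
  have h2 : ((72072:ℤ)).toNat = 72072 := rfl
  have hs : f (72072) = (45045) := by norm_num [f, reflect, h2, h1]
  exact reach_step hs r_45045

lemma r_m18909 : Reach (-18909) := by
  have h1 : rev 18909 = 90981 := by norm_num [rev, Nat.ofDigits]
  have h2 : ((18909:ℤ)).toNat = 18909 := rfl
  have hs : f (-18909) = (72072) := by norm_num [f, reflect, h2, h1]
  exact reach_step hs r_72072

lemma r_m59004 : Reach (-59004) := by
  have h1 : rev 59004 = 40095 := by norm_num [rev, Nat.ofDigits]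
  have h2 : ((59004:ℤ)).toNat = 59004 := rfl
  have hs : f (-59004) = (-18909) := by norm_num [f, reflect, h2, h1]
  exact reach_step hs r_m18909

lemma r_m5445 : Reach (-5445) := by
  have h1 : rev 5445 = 5445 := by norm_num [rev, Nat.ofDigits]
  have h2 : ((5445:ℤ)).toNat = 5445 := rfl
  have hs : f (-5445) = (0) := by norm_num [f, reflect, h2, h1]
  exact reach_step hs r_0

lemma r_m5940 : Reach (-5940) := by
  have h1 : rev 5940 = 495 := by norm_num [rev, Nat.ofDigits]
  have h2 : ((5940:ℤ)).toNat = 5940 := rfl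
  have hs : f (-5940) = (-5445) := by norm_num [f, reflect, h2, h1]
  exact reach_step hs r_m5445

lemma r_m57915 : Reach (-57915) := by
  have h1 : rev 57915 = 51975 := by norm_num [rev, Nat.ofDigits]
  have h2 : ((57915:ℤ)).toNat = 57915 := rfl
  have hs : f (-57915) = (-5940) := by norm_num [f, reflect, h2, h1]
  exact reach_step hs r_m5940

lemma r_79992 : Reach (79992) := by
  have h1 : rev 79992 = 29997 := by norm_num [rev, Nat.ofDigits]
  have h2 : ((79992:ℤ)).toNat = 79992 := rfl
  have hs : f (79992) = (49995) := by norm_num [f, reflect, h2, h1]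
  exact reach_step hs r_49995

lemma r_m14949 : Reach (-14949) := by
  have h1 : rev 14949 = 94941 := by norm_num [rev, Nat.ofDigits]
  have h2 : ((14949:ℤ)).toNat = 14949 := rfl
  have hs : f (-14949) = (79992) := by norm_num [f, reflect, h2, h1]
  exact reach_step hs r_79992

lemma r_m57024 : Reach (-57024) := by
  have h1 : rev 57024 = 42075 := by norm_num [rev, Nat.ofDigits]
  have h2 : ((57024:ℤ)).toNat = 57024 := rfl
  have hs : f (-57024) = (-14949) := by norm_num [f, reflect, h2, h1]
  exact reach_step hs r_m14949

lemma r_m1980 : Reach (-1980) := by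
  have h1 : rev 1980 = 891 := by norm_num [rev, Nat.ofDigits]
  have h2 : ((1980:ℤ)).toNat = 1980 := rfl
  have hs : f (-1980) = (-1089) := by norm_num [f, reflect, h2, h1]
  exact reach_step hs r_m1089

lemma r_m55935 : Reach (-55935) := by
  have h1 : rev 55935 = 53955 := by norm_num [rev, Nat.ofDigits]
  have h2 : ((55935:ℤ)).toNat = 55935 := rfl
  have hs : f (-55935) = (-1980) := by norm_num [f, reflect, h2, h1]
  exact reach_step hs r_m1980

lemma r_87912 : Reach (87912) := by
  have h1 : rev 87912 = 21978 := by norm_num [rev, Nat.ofDigits]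
  have h2 : ((87912:ℤ)).toNat = 87912 := rfl
  have hs : f (87912) = (65934) := by norm_num [f, reflect, h2, h1]
  exact reach_step hs r_65934

lemma r_m10989 : Reach (-10989) := by
  have h1 : rev 10989 = 98901 := by norm_num [rev, Nat.ofDigits]
  have h2 : ((10989:ℤ)).toNat = 10989 := rfl
  have hs : f (-10989) = (87912) := by norm_num [f, reflect, h2, h1]
  exact reach_step hs r_87912

lemma r_m55044 : Reach (-55044) := by
  have h1 : rev 55044 = 44055 := by norm_num [rev, Nat.ofDigits]
  have h2 : ((55044:ℤ)).toNat = 55044 := rfl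
  have hs : f (-55044) = (-10989) := by norm_num [f, reflect, h2, h1]
  exact reach_step hs r_m10989

lemma r_1980 : Reach (1980) := by
  have h1 : rev 1980 = 891 := by norm_num [rev, Nat.ofDigits]
  have h2 : ((1980:ℤ)).toNat = 1980 := rfl
  have hs : f (1980) = (1089) := by norm_num [f, reflect, h2, h1]
  exact reach_step hs r_1089

lemma r_m53955 : Reach (-53955) := by
  have h1 : rev 53955 = 55935 := by norm_num [rev, Nat.ofDigits]
  have h2 : ((53955:ℤ)).toNat = 53955 := rfl
  have hs : f (-53955) = (1980) := by norm_num [f, reflect, h2, h1]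
  exact reach_step hs r_1980

lemma r_m7029 : Reach (-7029) := by
  have h1 : rev 7029 = 9207 := by norm_num [rev, Nat.ofDigits]
  have h2 : ((7029:ℤ)).toNat = 7029 := rfl
  have hs : f (-7029) = (2178) := by norm_num [f, reflect, h2, h1]
  exact reach_step hs r_2178

lemma r_m53064 : Reach (-53064) := by
  have h1 : rev 53064 = 46035 := by norm_num [rev, Nat.ofDigits]
  have h2 : ((53064:ℤ)).toNat = 53064 := rfl
  have hs : f (-53064) = (-7029) := by norm_num [f, reflect, h2, h1]
  exact reach_step hs r_m7029

lemma r_5445 : Reach (5445) := by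
  have h1 : rev 5445 = 5445 := by norm_num [rev, Nat.ofDigits]
  have h2 : ((5445:ℤ)).toNat = 5445 := rfl
  have hs : f (5445) = (0) := by norm_num [f, reflect, h2, h1]
  exact reach_step hs r_0

lemma r_5940 : Reach (5940) := by
  have h1 : rev 5940 = 495 := by norm_num [rev, Nat.ofDigits]
  have h2 : ((5940:ℤ)).toNat = 5940 := rfl
  have hs : f (5940) = (5445) := by norm_num [f, reflect, h2, h1]
  exact reach_step hs r_5445

lemma r_m51975 : Reach (-51975) := by
  have h1 : rev 51975 = 57915 := by norm_num [rev, Nat.ofDigits]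
  have h2 : ((51975:ℤ)).toNat = 51975 := rfl
  have hs : f (-51975) = (5940) := by norm_num [f, reflect, h2, h1]
  exact reach_step hs r_5940

lemma r_m3069 : Reach (-3069) := by
  have h1 : rev 3069 = 9603 := by norm_num [rev, Nat.ofDigits]
  have h2 : ((3069:ℤ)).toNat = 3069 := rfl
  have hs : f (-3069) = (6534) := by norm_num [f, reflect, h2, h1]
  exact reach_step hs r_6534

lemma r_m51084 : Reach (-51084) := by
  have h1 : rev 51084 = 48015 := by norm_num [rev, Nat.ofDigits]
  have h2 : ((51084:ℤ)).toNat = 51084 := rfl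
  have hs : f (-51084) = (-3069) := by norm_num [f, reflect, h2, h1]
  exact reach_step hs r_m3069

lemma r_12078 : Reach (12078) := by
  have h1 : rev 12078 = 87021 := by norm_num [rev, Nat.ofDigits]
  have h2 : ((12078:ℤ)).toNat = 12078 := rfl
  have hs : f (12078) = (-74943) := by norm_num [f, reflect, h2, h1]
  exact reach_step hs r_m74943

lemma r_m48906 : Reach (-48906) := by
  have h1 : rev 48906 = 60984 := by norm_num [rev, Nat.ofDigits]
  have h2 : ((48906:ℤ)).toNat = 48906 := rfl
  have hs : f (-48906) = (12078) := by norm_num [f, reflect, h2, h1]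
  exact reach_step hs r_12078

lemma r_3069 : Reach (3069) := by
  have h1 : rev 3069 = 9603 := by norm_num [rev, Nat.ofDigits]
  have h2 : ((3069:ℤ)).toNat = 3069 := rfl
  have hs : f (3069) = (-6534) := by norm_num [f, reflect, h2, h1]
  exact reach_step hs r_m6534

lemma r_m48015 : Reach (-48015) := by
  have h1 : rev 48015 = 51084 := by norm_num [rev, Nat.ofDigits]
  have h2 : ((48015:ℤ)).toNat = 48015 := rfl
  have hs : f (-48015) = (3069) := by norm_num [f, reflect, h2, h1]
  exact reach_step hs r_3069

lemma r_16038 : Reach (16038) := by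
  have h1 : rev 16038 = 83061 := by norm_num [rev, Nat.ofDigits]
  have h2 : ((16038:ℤ)).toNat = 16038 := rfl
  have hs : f (16038) = (-67023) := by norm_num [f, reflect, h2, h1]
  exact reach_step hs r_m67023

lemma r_m46926 : Reach (-46926) := by
  have h1 : rev 46926 = 62964 := by norm_num [rev, Nat.ofDigits]
  have h2 : ((46926:ℤ)).toNat = 46926 := rfl
  have hs : f (-46926) = (16038) := by norm_num [f, reflect, h2, h1]
  exact reach_step hs r_16038

lemma r_7029 : Reach (7029) := by
  have h1 : rev 7029 = 9207 := by norm_num [rev, Nat.ofDigits]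
  have h2 : ((7029:ℤ)).toNat = 7029 := rfl
  have hs : f (7029) = (-2178) := by norm_num [f, reflect, h2, h1]
  exact reach_step hs r_m2178

lemma r_m46035 : Reach (-46035) := by
  have h1 : rev 46035 = 53064 := by norm_num [rev, Nat.ofDigits]
  have h2 : ((46035:ℤ)).toNat = 46035 := rfl
  have hs : f (-46035) = (7029) := by norm_num [f, reflect, h2, h1]
  exact reach_step hs r_7029

lemma r_19998 : Reach (19998) := by
  have h1 : rev 19998 = 89991 := by norm_num [rev, Nat.ofDigits]
  have h2 : ((19998:ℤ)).toNat = 19998 := rfl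
  have hs : f (19998) = (-69993) := by norm_num [f, reflect, h2, h1]
  exact reach_step hs r_m69993

lemma r_m44946 : Reach (-44946) := by
  have h1 : rev 44946 = 64944 := by norm_num [rev, Nat.ofDigits]
  have h2 : ((44946:ℤ)).toNat = 44946 := rfl
  have hs : f (-44946) = (19998) := by norm_num [f, reflect, h2, h1]
  exact reach_step hs r_19998

lemma r_10989 : Reach (10989) := by
  have h1 : rev 10989 = 98901 := by norm_num [rev, Nat.ofDigits]
  have h2 : ((10989:ℤ)).toNat = 10989 := rfl
  have hs : f (10989) = (-87912) := by norm_num [f, reflect, h2, h1]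
  exact reach_step hs r_m87912

lemma r_m44055 : Reach (-44055) := by
  have h1 : rev 44055 = 55044 := by norm_num [rev, Nat.ofDigits]
  have h2 : ((44055:ℤ)).toNat = 44055 := rfl
  have hs : f (-44055) = (10989) := by norm_num [f, reflect, h2, h1]
  exact reach_step hs r_10989

lemma r_23958 : Reach (23958) := by
  have h1 : rev 23958 = 85932 := by norm_num [rev, Nat.ofDigits]
  have h2 : ((23958:ℤ)).toNat = 23958 := rfl
  have hs : f (23958) = (-61974) := by norm_num [f, reflect, h2, h1]
  exact reach_step hs r_m61974

lemma r_m42966 : Reach (-42966) := by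
  have h1 : rev 42966 = 66924 := by norm_num [rev, Nat.ofDigits]
  have h2 : ((42966:ℤ)).toNat = 42966 := rfl
  have hs : f (-42966) = (23958) := by norm_num [f, reflect, h2, h1]
  exact reach_step hs r_23958

lemma r_14949 : Reach (14949) := by
  have h1 : rev 14949 = 94941 := by norm_num [rev, Nat.ofDigits]
  have h2 : ((14949:ℤ)).toNat = 14949 := rfl
  have hs : f (14949) = (-79992) := by norm_num [f, reflect, h2, h1]
  exact reach_step hs r_m79992

lemma r_m42075 : Reach (-42075) := by
  have h1 : rev 42075 = 57024 := by norm_num [rev, Nat.ofDigits]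
  have h2 : ((42075:ℤ)).toNat = 42075 := rfl
  have hs : f (-42075) = (14949) := by norm_num [f, reflect, h2, h1]
  exact reach_step hs r_14949

lemma r_m41085 : Reach (-41085) := by
  have h1 : rev 41085 = 58014 := by norm_num [rev, Nat.ofDigits]
  have h2 : ((41085:ℤ)).toNat = 41085 := rfl
  have hs : f (-41085) = (16929) := by norm_num [f, reflect, h2, h1]
  exact reach_step hs r_16929

lemma r_27918 : Reach (27918) := by
  have h1 : rev 27918 = 81972 := by norm_num [rev, Nat.ofDigits]
  have h2 : ((27918:ℤ)).toNat = 27918 := rfl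
  have hs : f (27918) = (-54054) := by norm_num [f, reflect, h2, h1]
  exact reach_step hs r_m54054

lemma r_m40986 : Reach (-40986) := by
  have h1 : rev 40986 = 68904 := by norm_num [rev, Nat.ofDigits]
  have h2 : ((40986:ℤ)).toNat = 40986 := rfl
  have hs : f (-40986) = (27918) := by norm_num [f, reflect, h2, h1]
  exact reach_step hs r_27918

lemma r_21087 : Reach (21087) := by
  have h1 : rev 21087 = 78012 := by norm_num [rev, Nat.ofDigits]
  have h2 : ((21087:ℤ)).toNat = 21087 := rfl
  have hs : f (21087) = (-56925) := by norm_num [f, reflect, h2, h1]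
  exact reach_step hs r_m56925

lemma r_m39006 : Reach (-39006) := by
  have h1 : rev 39006 = 60093 := by norm_num [rev, Nat.ofDigits]
  have h2 : ((39006:ℤ)).toNat = 39006 := rfl
  have hs : f (-39006) = (21087) := by norm_num [f, reflect, h2, h1]
  exact reach_step hs r_21087

lemma r_34056 : Reach (34056) := by
  have h1 : rev 34056 = 65043 := by norm_num [rev, Nat.ofDigits]
  have h2 : ((34056:ℤ)).toNat = 34056 := rfl
  have hs : f (34056) = (-30987) := by norm_num [f, reflect, h2, h1]
  exact reach_step hs r_m30987

lemma r_m37917 : Reach (-37917) := by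
  have h1 : rev 37917 = 71973 := by norm_num [rev, Nat.ofDigits]
  have h2 : ((37917:ℤ)).toNat = 37917 := rfl
  have hs : f (-37917) = (34056) := by norm_num [f, reflect, h2, h1]
  exact reach_step hs r_34056

lemma r_25047 : Reach (25047) := by
  have h1 : rev 25047 = 74052 := by norm_num [rev, Nat.ofDigits]
  have h2 : ((25047:ℤ)).toNat = 25047 := rfl
  have hs : f (25047) = (-49005) := by norm_num [f, reflect, h2, h1]
  exact reach_step hs r_m49005

lemma r_m37026 : Reach (-37026) := by
  have h1 : rev 37026 = 62073 := by norm_num [rev, Nat.ofDigits]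
  have h2 : ((37026:ℤ)).toNat = 37026 := rfl
  have hs : f (-37026) = (25047) := by norm_num [f, reflect, h2, h1]
  exact reach_step hs r_25047

lemma r_38016 : Reach (38016) := by
  have h1 : rev 38016 = 61083 := by norm_num [rev, Nat.ofDigits]
  have h2 : ((38016:ℤ)).toNat = 38016 := rfl
  have hs : f (38016) = (-23067) := by norm_num [f, reflect, h2, h1]
  exact reach_step hs r_m23067

lemma r_m35937 : Reach (-35937) := by
  have h1 : rev 35937 = 73953 := by norm_num [rev, Nat.ofDigits]
  have h2 : ((35937:ℤ)).toNat = 35937 := rfl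
  have hs : f (-35937) = (38016) := by norm_num [f, reflect, h2, h1]
  exact reach_step hs r_38016

lemma r_29007 : Reach (29007) := by
  have h1 : rev 29007 = 70092 := by norm_num [rev, Nat.ofDigits]
  have h2 : ((29007:ℤ)).toNat = 29007 := rfl
  have hs : f (29007) = (-41085) := by norm_num [f, reflect, h2, h1]
  exact reach_step hs r_m41085

lemma r_m35046 : Reach (-35046) := by
  have h1 : rev 35046 = 64053 := by norm_num [rev, Nat.ofDigits]
  have h2 : ((35046:ℤ)).toNat = 35046 := rfl
  have hs : f (-35046) = (29007) := by norm_num [f, reflect, h2, h1]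
  exact reach_step hs r_29007

lemma r_41976 : Reach (41976) := by
  have h1 : rev 41976 = 67914 := by norm_num [rev, Nat.ofDigits]
  have h2 : ((41976:ℤ)).toNat = 41976 := rfl
  have hs : f (41976) = (-25938) := by norm_num [f, reflect, h2, h1]
  exact reach_step hs r_m25938

lemma r_m33957 : Reach (-33957) := by
  have h1 : rev 33957 = 75933 := by norm_num [rev, Nat.ofDigits]
  have h2 : ((33957:ℤ)).toNat = 33957 := rfl
  have hs : f (-33957) = (41976) := by norm_num [f, reflect, h2, h1]
  exact reach_step hs r_41976

lemma r_32967 : Reach (32967) := by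
  have h1 : rev 32967 = 76923 := by norm_num [rev, Nat.ofDigits]
  have h2 : ((32967:ℤ)).toNat = 32967 := rfl
  have hs : f (32967) = (-43956) := by norm_num [f, reflect, h2, h1]
  exact reach_step hs r_m43956

lemma r_m33066 : Reach (-33066) := by
  have h1 : rev 33066 = 66033 := by norm_num [rev, Nat.ofDigits]
  have h2 : ((33066:ℤ)).toNat = 33066 := rfl
  have hs : f (-33066) = (32967) := by norm_num [f, reflect, h2, h1]
  exact reach_step hs r_32967

lemma r_45936 : Reach (45936) := by
  have h1 : rev 45936 = 63954 := by norm_num [rev, Nat.ofDigits]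
  have h2 : ((45936:ℤ)).toNat = 45936 := rfl
  have hs : f (45936) = (-18018) := by norm_num [f, reflect, h2, h1]
  exact reach_step hs r_m18018

lemma r_m31977 : Reach (-31977) := by
  have h1 : rev 31977 = 77913 := by norm_num [rev, Nat.ofDigits]
  have h2 : ((31977:ℤ)).toNat = 31977 := rfl
  have hs : f (-31977) = (45936) := by norm_num [f, reflect, h2, h1]
  exact reach_step hs r_45936

lemma r_36927 : Reach (36927) := by
  have h1 : rev 36927 = 72963 := by norm_num [rev, Nat.ofDigits]
  have h2 : ((36927:ℤ)).toNat = 36927 := rfl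
  have hs : f (36927) = (-36036) := by norm_num [f, reflect, h2, h1]
  exact reach_step hs r_m36036

lemma r_m31086 : Reach (-31086) := by
  have h1 : rev 31086 = 68013 := by norm_num [rev, Nat.ofDigits]
  have h2 : ((31086:ℤ)).toNat = 31086 := rfl
  have hs : f (-31086) = (36927) := by norm_num [f, reflect, h2, h1]
  exact reach_step hs r_36927

lemma r_52074 : Reach (52074) := by
  have h1 : rev 52074 = 47025 := by norm_num [rev, Nat.ofDigits]
  have h2 : ((52074:ℤ)).toNat = 52074 := rfl
  have hs : f (52074) = (5049) := by norm_num [f, reflect, h2, h1]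
  exact reach_step hs r_5049

lemma r_m28908 : Reach (-28908) := by
  have h1 : rev 28908 = 80982 := by norm_num [rev, Nat.ofDigits]
  have h2 : ((28908:ℤ)).toNat = 28908 := rfl
  have hs : f (-28908) = (52074) := by norm_num [f, reflect, h2, h1]
  exact reach_step hs r_52074

lemma r_43065 : Reach (43065) := by
  have h1 : rev 43065 = 56034 := by norm_num [rev, Nat.ofDigits]
  have h2 : ((43065:ℤ)).toNat = 43065 := rfl
  have hs : f (43065) = (-12969) := by norm_num [f, reflect, h2, h1]
  exact reach_step hs r_m12969

lemma r_m28017 : Reach (-28017) := by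
  have h1 : rev 28017 = 71082 := by norm_num [rev, Nat.ofDigits]
  have h2 : ((28017:ℤ)).toNat = 28017 := rfl
  have hs : f (-28017) = (43065) := by norm_num [f, reflect, h2, h1]
  exact reach_step hs r_43065

lemma r_56034 : Reach (56034) := by
  have h1 : rev 56034 = 43065 := by norm_num [rev, Nat.ofDigits]
  have h2 : ((56034:ℤ)).toNat = 56034 := rfl
  have hs : f (56034) = (12969) := by norm_num [f, reflect, h2, h1]
  exact reach_step hs r_12969

lemma r_m26928 : Reach (-26928) := by
  have h1 : rev 26928 = 82962 := by norm_num [rev, Nat.ofDigits]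
  have h2 : ((26928:ℤ)).toNat = 26928 := rfl
  have hs : f (-26928) = (56034) := by norm_num [f, reflect, h2, h1]
  exact reach_step hs r_56034

lemma r_47025 : Reach (47025) := by
  have h1 : rev 47025 = 52074 := by norm_num [rev, Nat.ofDigits]
  have h2 : ((47025:ℤ)).toNat = 47025 := rfl
  have hs : f (47025) = (-5049) := by norm_num [f, reflect, h2, h1]
  exact reach_step hs r_m5049

lemma r_m26037 : Reach (-26037) := by
  have h1 : rev 26037 = 73062 := by norm_num [rev, Nat.ofDigits]
  have h2 : ((26037:ℤ)).toNat = 26037 := rfl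
  have hs : f (-26037) = (47025) := by norm_num [f, reflect, h2, h1]
  exact reach_step hs r_47025

lemma r_59994 : Reach (59994) := by
  have h1 : rev 59994 = 49995 := by norm_num [rev, Nat.ofDigits]
  have h2 : ((59994:ℤ)).toNat = 59994 := rfl
  have hs : f (59994) = (9999) := by norm_num [f, reflect, h2, h1]
  exact reach_step hs r_9999

lemma r_m24948 : Reach (-24948) := by
  have h1 : rev 24948 = 84942 := by norm_num [rev, Nat.ofDigits]
  have h2 : ((24948:ℤ)).toNat = 24948 := rfl
  have hs : f (-24948) = (59994) := by norm_num [f, reflect, h2, h1]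
  exact reach_step hs r_59994

lemma r_50985 : Reach (50985) := by
  have h1 : rev 50985 = 58905 := by norm_num [rev, Nat.ofDigits]
  have h2 : ((50985:ℤ)).toNat = 50985 := rfl
  have hs : f (50985) = (-7920) := by norm_num [f, reflect, h2, h1]
  exact reach_step hs r_m7920

lemma r_m24057 : Reach (-24057) := by
  have h1 : rev 24057 = 75042 := by norm_num [rev, Nat.ofDigits]
  have h2 : ((24057:ℤ)).toNat = 24057 := rfl
  have hs : f (-24057) = (50985) := by norm_num [f, reflect, h2, h1]
  exact reach_step hs r_50985

lemma r_63954 : Reach (63954) := by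
  have h1 : rev 63954 = 45936 := by norm_num [rev, Nat.ofDigits]
  have h2 : ((63954:ℤ)).toNat = 63954 := rfl
  have hs : f (63954) = (18018) := by norm_num [f, reflect, h2, h1]
  exact reach_step hs r_18018

lemma r_m22968 : Reach (-22968) := by
  have h1 : rev 22968 = 86922 := by norm_num [rev, Nat.ofDigits]
  have h2 : ((22968:ℤ)).toNat = 22968 := rfl
  have hs : f (-22968) = (63954) := by norm_num [f, reflect, h2, h1]
  exact reach_step hs r_63954

lemma r_54945 : Reach (54945) := by
  have h1 : rev 54945 = 54945 := by norm_num [rev, Nat.ofDigits]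
  have h2 : ((54945:ℤ)).toNat = 54945 := rfl
  have hs : f (54945) = (0) := by norm_num [f, reflect, h2, h1]
  exact reach_step hs r_0

lemma r_m22077 : Reach (-22077) := by
  have h1 : rev 22077 = 77022 := by norm_num [rev, Nat.ofDigits]
  have h2 : ((22077:ℤ)).toNat = 22077 := rfl
  have hs : f (-22077) = (54945) := by norm_num [f, reflect, h2, h1]
  exact reach_step hs r_54945

lemma r_56925 : Reach (56925) := by
  have h1 : rev 56925 = 52965 := by norm_num [rev, Nat.ofDigits]
  have h2 : ((56925:ℤ)).toNat = 56925 := rfl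
  have hs : f (56925) = (3960) := by norm_num [f, reflect, h2, h1]
  exact reach_step hs r_3960

lemma r_m21087 : Reach (-21087) := by
  have h1 : rev 21087 = 78012 := by norm_num [rev, Nat.ofDigits]
  have h2 : ((21087:ℤ)).toNat = 21087 := rfl
  have hs : f (-21087) = (56925) := by norm_num [f, reflect, h2, h1]
  exact reach_step hs r_56925

lemma r_67914 : Reach (67914) := by
  have h1 : rev 67914 = 41976 := by norm_num [rev, Nat.ofDigits]
  have h2 : ((67914:ℤ)).toNat = 67914 := rfl
  have hs : f (67914) = (25938) := by norm_num [f, reflect, h2, h1]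
  exact reach_step hs r_25938

lemma r_m20988 : Reach (-20988) := by
  have h1 : rev 20988 = 88902 := by norm_num [rev, Nat.ofDigits]
  have h2 : ((20988:ℤ)).toNat = 20988 := rfl
  have hs : f (-20988) = (67914) := by norm_num [f, reflect, h2, h1]
  exact reach_step hs r_67914

lemma r_61083 : Reach (61083) := by
  have h1 : rev 61083 = 38016 := by norm_num [rev, Nat.ofDigits]
  have h2 : ((61083:ℤ)).toNat = 61083 := rfl
  have hs : f (61083) = (23067) := by norm_num [f, reflect, h2, h1]
  exact reach_step hs r_23067

lemma r_m19008 : Reach (-19008) := by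
  have h1 : rev 19008 = 80091 := by norm_num [rev, Nat.ofDigits]
  have h2 : ((19008:ℤ)).toNat = 19008 := rfl
  have hs : f (-19008) = (61083) := by norm_num [f, reflect, h2, h1]
  exact reach_step hs r_61083

lemma r_74052 : Reach (74052) := by
  have h1 : rev 74052 = 25047 := by norm_num [rev, Nat.ofDigits]
  have h2 : ((74052:ℤ)).toNat = 74052 := rfl
  have hs : f (74052) = (49005) := by norm_num [f, reflect, h2, h1]
  exact reach_step hs r_49005

lemma r_m17919 : Reach (-17919) := by
  have h1 : rev 17919 = 91971 := by norm_num [rev, Nat.ofDigits]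
  have h2 : ((17919:ℤ)).toNat = 17919 := rfl
  have hs : f (-17919) = (74052) := by norm_num [f, reflect, h2, h1]
  exact reach_step hs r_74052

lemma r_65043 : Reach (65043) := by
  have h1 : rev 65043 = 34056 := by norm_num [rev, Nat.ofDigits]
  have h2 : ((65043:ℤ)).toNat = 65043 := rfl
  have hs : f (65043) = (30987) := by norm_num [f, reflect, h2, h1]
  exact reach_step hs r_30987

lemma r_m17028 : Reach (-17028) := by
  have h1 : rev 17028 = 82071 := by norm_num [rev, Nat.ofDigits]
  have h2 : ((17028:ℤ)).toNat = 17028 := rfl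
  have hs : f (-17028) = (65043) := by norm_num [f, reflect, h2, h1]
  exact reach_step hs r_65043

lemma r_78012 : Reach (78012) := by
  have h1 : rev 78012 = 21087 := by norm_num [rev, Nat.ofDigits]
  have h2 : ((78012:ℤ)).toNat = 78012 := rfl
  have hs : f (78012) = (56925) := by norm_num [f, reflect, h2, h1]
  exact reach_step hs r_56925

lemma r_m15939 : Reach (-15939) := by
  have h1 : rev 15939 = 93951 := by norm_num [rev, Nat.ofDigits]
  have h2 : ((15939:ℤ)).toNat = 15939 := rfl
  have hs : f (-15939) = (78012) := by norm_num [f, reflect, h2, h1]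
  exact reach_step hs r_78012

lemma r_38907 : Reach (38907) := by
  have h1 : rev 38907 = 70983 := by norm_num [rev, Nat.ofDigits]
  have h2 : ((38907:ℤ)).toNat = 38907 := rfl
  have hs : f (38907) = (-32076) := by norm_num [f, reflect, h2, h1]
  exact reach_step hs r_m32076

lemma r_69003 : Reach (69003) := by
  have h1 : rev 69003 = 30096 := by norm_num [rev, Nat.ofDigits]
  have h2 : ((69003:ℤ)).toNat = 69003 := rfl
  have hs : f (69003) = (38907) := by norm_num [f, reflect, h2, h1]
  exact reach_step hs r_38907

lemma r_m15048 : Reach (-15048) := by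
  have h1 : rev 15048 = 84051 := by norm_num [rev, Nat.ofDigits]
  have h2 : ((15048:ℤ)).toNat = 15048 := rfl
  have hs : f (-15048) = (69003) := by norm_num [f, reflect, h2, h1]
  exact reach_step hs r_69003

lemma r_81972 : Reach (81972) := by
  have h1 : rev 81972 = 27918 := by norm_num [rev, Nat.ofDigits]
  have h2 : ((81972:ℤ)).toNat = 81972 := rfl
  have hs : f (81972) = (54054) := by norm_num [f, reflect, h2, h1]
  exact reach_step hs r_54054

lemma r_m13959 : Reach (-13959) := by
  have h1 : rev 13959 = 95931 := by norm_num [rev, Nat.ofDigits]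
  have h2 : ((13959:ℤ)).toNat = 13959 := rfl
  have hs : f (-13959) = (81972) := by norm_num [f, reflect, h2, h1]
  exact reach_step hs r_81972

lemma r_72963 : Reach (72963) := by
  have h1 : rev 72963 = 36927 := by norm_num [rev, Nat.ofDigits]
  have h2 : ((72963:ℤ)).toNat = 72963 := rfl
  have hs : f (72963) = (36036) := by norm_num [f, reflect, h2, h1]
  exact reach_step hs r_36036

lemma r_m13068 : Reach (-13068) := by
  have h1 : rev 13068 = 86031 := by norm_num [rev, Nat.ofDigits]
  have h2 : ((13068:ℤ)).toNat = 13068 := rfl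
  have hs : f (-13068) = (72963) := by norm_num [f, reflect, h2, h1]
  exact reach_step hs r_72963

lemma r_85932 : Reach (85932) := by
  have h1 : rev 85932 = 23958 := by norm_num [rev, Nat.ofDigits]
  have h2 : ((85932:ℤ)).toNat = 85932 := rfl
  have hs : f (85932) = (61974) := by norm_num [f, reflect, h2, h1]
  exact reach_step hs r_61974

lemma r_m11979 : Reach (-11979) := by
  have h1 : rev 11979 = 97911 := by norm_num [rev, Nat.ofDigits]
  have h2 : ((11979:ℤ)).toNat = 11979 := rfl
  have hs : f (-11979) = (85932) := by norm_num [f, reflect, h2, h1]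
  exact reach_step hs r_85932

lemma r_76923 : Reach (76923) := by
  have h1 : rev 76923 = 32967 := by norm_num [rev, Nat.ofDigits]
  have h2 : ((76923:ℤ)).toNat = 76923 := rfl
  have hs : f (76923) = (43956) := by norm_num [f, reflect, h2, h1]
  exact reach_step hs r_43956

lemma r_m11088 : Reach (-11088) := by
  have h1 : rev 11088 = 88011 := by norm_num [rev, Nat.ofDigits]
  have h2 : ((11088:ℤ)).toNat = 11088 := rfl
  have hs : f (-11088) = (76923) := by norm_num [f, reflect, h2, h1]
  exact reach_step hs r_76923

lemma r_m8910 : Reach (-8910) := by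
  have h1 : rev 8910 = 198 := by norm_num [rev, Nat.ofDigits]
  have h2 : ((8910:ℤ)).toNat = 8910 := rfl
  have hs : f (-8910) = (-8712) := by norm_num [f, reflect, h2, h1]
  exact reach_step hs r_m8712

lemma r_m8019 : Reach (-8019) := by
  have h1 : rev 8019 = 9108 := by norm_num [rev, Nat.ofDigits]
  have h2 : ((8019:ℤ)).toNat = 8019 := rfl
  have hs : f (-8019) = (1089) := by norm_num [f, reflect, h2, h1]
  exact reach_step hs r_1089

lemma r_m6930 : Reach (-6930) := by
  have h1 : rev 6930 = 396 := by norm_num [rev, Nat.ofDigits]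
  have h2 : ((6930:ℤ)).toNat = 6930 := rfl
  have hs : f (-6930) = (-6534) := by norm_num [f, reflect, h2, h1]
  exact reach_step hs r_m6534

lemma r_m6039 : Reach (-6039) := by
  have h1 : rev 6039 = 9306 := by norm_num [rev, Nat.ofDigits]
  have h2 : ((6039:ℤ)).toNat = 6039 := rfl
  have hs : f (-6039) = (3267) := by norm_num [f, reflect, h2, h1]
  exact reach_step hs r_3267

lemma r_m4950 : Reach (-4950) := by
  have h1 : rev 4950 = 594 := by norm_num [rev, Nat.ofDigits]
  have h2 : ((4950:ℤ)).toNat = 4950 := rfl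
  have hs : f (-4950) = (-4356) := by norm_num [f, reflect, h2, h1]
  exact reach_step hs r_m4356

lemma r_m4059 : Reach (-4059) := by
  have h1 : rev 4059 = 9504 := by norm_num [rev, Nat.ofDigits]
  have h2 : ((4059:ℤ)).toNat = 4059 := rfl
  have hs : f (-4059) = (5445) := by norm_num [f, reflect, h2, h1]
  exact reach_step hs r_5445

lemma r_m2970 : Reach (-2970) := by
  have h1 : rev 2970 = 792 := by norm_num [rev, Nat.ofDigits]
  have h2 : ((2970:ℤ)).toNat = 2970 := rfl
  have hs : f (-2970) = (-2178) := by norm_num [f, reflect, h2, h1]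
  exact reach_step hs r_m2178

lemma r_m2079 : Reach (-2079) := by
  have h1 : rev 2079 = 9702 := by norm_num [rev, Nat.ofDigits]
  have h2 : ((2079:ℤ)).toNat = 2079 := rfl
  have hs : f (-2079) = (7623) := by norm_num [f, reflect, h2, h1]
  exact reach_step hs r_7623

lemma r_m99 : Reach (-99) := by
  have h1 : rev 99 = 99 := by norm_num [rev, Nat.ofDigits]
  have h2 : ((99:ℤ)).toNat = 99 := rfl
  have hs : f (-99) = (0) := by norm_num [f, reflect, h2, h1]
  exact reach_step hs r_0

lemma r_495 : Reach (495) := by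
  have h1 : rev 495 = 594 := by norm_num [rev, Nat.ofDigits]
  have h2 : ((495:ℤ)).toNat = 495 := rfl
  have hs : f (495) = (-99) := by norm_num [f, reflect, h2, h1]
  exact reach_step hs r_m99

lemma r_m297 : Reach (-297) := by
  have h1 : rev 297 = 792 := by norm_num [rev, Nat.ofDigits]
  have h2 : ((297:ℤ)).toNat = 297 := rfl
  have hs : f (-297) = (495) := by norm_num [f, reflect, h2, h1]
  exact reach_step hs r_495

lemma r_m693 : Reach (-693) := by
  have h1 : rev 693 = 396 := by norm_num [rev, Nat.ofDigits]
  have h2 : ((693:ℤ)).toNat = 693 := rfl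
  have hs : f (-693) = (-297) := by norm_num [f, reflect, h2, h1]
  exact reach_step hs r_m297

lemma r_m891 : Reach (-891) := by
  have h1 : rev 891 = 198 := by norm_num [rev, Nat.ofDigits]
  have h2 : ((891:ℤ)).toNat = 891 := rfl
  have hs : f (-891) = (-693) := by norm_num [f, reflect, h2, h1]
  exact reach_step hs r_m693

lemma r_m990 : Reach (-990) := by
  have h1 : rev 990 = 99 := by norm_num [rev, Nat.ofDigits]
  have h2 : ((990:ℤ)).toNat = 990 := rfl
  have hs : f (-990) = (-891) := by norm_num [f, reflect, h2, h1]
  exact reach_step hs r_m891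

lemma r_99 : Reach (99) := by
  have h1 : rev 99 = 99 := by norm_num [rev, Nat.ofDigits]
  have h2 : ((99:ℤ)).toNat = 99 := rfl
  have hs : f (99) = (0) := by norm_num [f, reflect, h2, h1]
  exact reach_step hs r_0

lemma r_m495 : Reach (-495) := by
  have h1 : rev 495 = 594 := by norm_num [rev, Nat.ofDigits]
  have h2 : ((495:ℤ)).toNat = 495 := rfl
  have hs : f (-495) = (99) := by norm_num [f, reflect, h2, h1]
  exact reach_step hs r_99

lemma r_297 : Reach (297) := by
  have h1 : rev 297 = 792 := by norm_num [rev, Nat.ofDigits]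
  have h2 : ((297:ℤ)).toNat = 297 := rfl
  have hs : f (297) = (-495) := by norm_num [f, reflect, h2, h1]
  exact reach_step hs r_m495

lemma r_693 : Reach (693) := by
  have h1 : rev 693 = 396 := by norm_num [rev, Nat.ofDigits]
  have h2 : ((693:ℤ)).toNat = 693 := rfl
  have hs : f (693) = (297) := by norm_num [f, reflect, h2, h1]
  exact reach_step hs r_297

lemma r_891 : Reach (891) := by
  have h1 : rev 891 = 198 := by norm_num [rev, Nat.ofDigits]
  have h2 : ((891:ℤ)).toNat = 891 := rfl
  have hs : f (891) = (693) := by norm_num [f, reflect, h2, h1]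
  exact reach_step hs r_693

lemma r_990 : Reach (990) := by
  have h1 : rev 990 = 99 := by norm_num [rev, Nat.ofDigits]
  have h2 : ((990:ℤ)).toNat = 990 := rfl
  have hs : f (990) = (891) := by norm_num [f, reflect, h2, h1]
  exact reach_step hs r_891

lemma r_2079 : Reach (2079) := by
  have h1 : rev 2079 = 9702 := by norm_num [rev, Nat.ofDigits]
  have h2 : ((2079:ℤ)).toNat = 2079 := rfl
  have hs : f (2079) = (-7623) := by norm_num [f, reflect, h2, h1]
  exact reach_step hs r_m7623

lemma r_2970 : Reach (2970) := by
  have h1 : rev 2970 = 792 := by norm_num [rev, Nat.ofDigits]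
  have h2 : ((2970:ℤ)).toNat = 2970 := rfl
  have hs : f (2970) = (2178) := by norm_num [f, reflect, h2, h1]
  exact reach_step hs r_2178

lemma r_4059 : Reach (4059) := by
  have h1 : rev 4059 = 9504 := by norm_num [rev, Nat.ofDigits]
  have h2 : ((4059:ℤ)).toNat = 4059 := rfl
  have hs : f (4059) = (-5445) := by norm_num [f, reflect, h2, h1]
  exact reach_step hs r_m5445

lemma r_4950 : Reach (4950) := by
  have h1 : rev 4950 = 594 := by norm_num [rev, Nat.ofDigits]
  have h2 : ((4950:ℤ)).toNat = 4950 := rfl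
  have hs : f (4950) = (4356) := by norm_num [f, reflect, h2, h1]
  exact reach_step hs r_4356

lemma r_6039 : Reach (6039) := by
  have h1 : rev 6039 = 9306 := by norm_num [rev, Nat.ofDigits]
  have h2 : ((6039:ℤ)).toNat = 6039 := rfl
  have hs : f (6039) = (-3267) := by norm_num [f, reflect, h2, h1]
  exact reach_step hs r_m3267

lemma r_6930 : Reach (6930) := by
  have h1 : rev 6930 = 396 := by norm_num [rev, Nat.ofDigits]
  have h2 : ((6930:ℤ)).toNat = 6930 := rfl
  have hs : f (6930) = (6534) := by norm_num [f, reflect, h2, h1]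
  exact reach_step hs r_6534

lemma r_8019 : Reach (8019) := by
  have h1 : rev 8019 = 9108 := by norm_num [rev, Nat.ofDigits]
  have h2 : ((8019:ℤ)).toNat = 8019 := rfl
  have hs : f (8019) = (-1089) := by norm_num [f, reflect, h2, h1]
  exact reach_step hs r_m1089

lemma r_8910 : Reach (8910) := by
  have h1 : rev 8910 = 198 := by norm_num [rev, Nat.ofDigits]
  have h2 : ((8910:ℤ)).toNat = 8910 := rfl
  have hs : f (8910) = (8712) := by norm_num [f, reflect, h2, h1]
  exact reach_step hs r_8712

lemma r_11088 : Reach (11088) := by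
  have h1 : rev 11088 = 88011 := by norm_num [rev, Nat.ofDigits]
  have h2 : ((11088:ℤ)).toNat = 11088 := rfl
  have hs : f (11088) = (-76923) := by norm_num [f, reflect, h2, h1]
  exact reach_step hs r_m76923

lemma r_11979 : Reach (11979) := by
  have h1 : rev 11979 = 97911 := by norm_num [rev, Nat.ofDigits]
  have h2 : ((11979:ℤ)).toNat = 11979 := rfl
  have hs : f (11979) = (-85932) := by norm_num [f, reflect, h2, h1]
  exact reach_step hs r_m85932

lemma r_13068 : Reach (13068) := by
  have h1 : rev 13068 = 86031 := by norm_num [rev, Nat.ofDigits]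
  have h2 : ((13068:ℤ)).toNat = 13068 := rfl
  have hs : f (13068) = (-72963) := by norm_num [f, reflect, h2, h1]
  exact reach_step hs r_m72963

lemma r_13959 : Reach (13959) := by
  have h1 : rev 13959 = 95931 := by norm_num [rev, Nat.ofDigits]
  have h2 : ((13959:ℤ)).toNat = 13959 := rfl
  have hs : f (13959) = (-81972) := by norm_num [f, reflect, h2, h1]
  exact reach_step hs r_m81972

lemma r_15048 : Reach (15048) := by
  have h1 : rev 15048 = 84051 := by norm_num [rev, Nat.ofDigits]
  have h2 : ((15048:ℤ)).toNat = 15048 := rfl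
  have hs : f (15048) = (-69003) := by norm_num [f, reflect, h2, h1]
  exact reach_step hs r_m69003

lemma r_15939 : Reach (15939) := by
  have h1 : rev 15939 = 93951 := by norm_num [rev, Nat.ofDigits]
  have h2 : ((15939:ℤ)).toNat = 15939 := rfl
  have hs : f (15939) = (-78012) := by norm_num [f, reflect, h2, h1]
  exact reach_step hs r_m78012

lemma r_17028 : Reach (17028) := by
  have h1 : rev 17028 = 82071 := by norm_num [rev, Nat.ofDigits]
  have h2 : ((17028:ℤ)).toNat = 17028 := rfl
  have hs : f (17028) = (-65043) := by norm_num [f, reflect, h2, h1]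
  exact reach_step hs r_m65043

lemma r_17919 : Reach (17919) := by
  have h1 : rev 17919 = 91971 := by norm_num [rev, Nat.ofDigits]
  have h2 : ((17919:ℤ)).toNat = 17919 := rfl
  have hs : f (17919) = (-74052) := by norm_num [f, reflect, h2, h1]
  exact reach_step hs r_m74052

lemma r_18909 : Reach (18909) := by
  have h1 : rev 18909 = 90981 := by norm_num [rev, Nat.ofDigits]
  have h2 : ((18909:ℤ)).toNat = 18909 := rfl
  have hs : f (18909) = (-72072) := by norm_num [f, reflect, h2, h1]
  exact reach_step hs r_m72072

lemma r_19008 : Reach (19008) := by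
  have h1 : rev 19008 = 80091 := by norm_num [rev, Nat.ofDigits]
  have h2 : ((19008:ℤ)).toNat = 19008 := rfl
  have hs : f (19008) = (-61083) := by norm_num [f, reflect, h2, h1]
  exact reach_step hs r_m61083

lemma r_20988 : Reach (20988) := by
  have h1 : rev 20988 = 88902 := by norm_num [rev, Nat.ofDigits]
  have h2 : ((20988:ℤ)).toNat = 20988 := rfl
  have hs : f (20988) = (-67914) := by norm_num [f, reflect, h2, h1]
  exact reach_step hs r_m67914

lemma r_22077 : Reach (22077) := by
  have h1 : rev 22077 = 77022 := by norm_num [rev, Nat.ofDigits]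
  have h2 : ((22077:ℤ)).toNat = 22077 := rfl
  have hs : f (22077) = (-54945) := by norm_num [f, reflect, h2, h1]
  exact reach_step hs r_m54945

lemma r_22968 : Reach (22968) := by
  have h1 : rev 22968 = 86922 := by norm_num [rev, Nat.ofDigits]
  have h2 : ((22968:ℤ)).toNat = 22968 := rfl
  have hs : f (22968) = (-63954) := by norm_num [f, reflect, h2, h1]
  exact reach_step hs r_m63954

lemma r_24057 : Reach (24057) := by
  have h1 : rev 24057 = 75042 := by norm_num [rev, Nat.ofDigits]
  have h2 : ((24057:ℤ)).toNat = 24057 := rfl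
  have hs : f (24057) = (-50985) := by norm_num [f, reflect, h2, h1]
  exact reach_step hs r_m50985

lemma r_24948 : Reach (24948) := by
  have h1 : rev 24948 = 84942 := by norm_num [rev, Nat.ofDigits]
  have h2 : ((24948:ℤ)).toNat = 24948 := rfl
  have hs : f (24948) = (-59994) := by norm_num [f, reflect, h2, h1]
  exact reach_step hs r_m59994

lemma r_26037 : Reach (26037) := by
  have h1 : rev 26037 = 73062 := by norm_num [rev, Nat.ofDigits]
  have h2 : ((26037:ℤ)).toNat = 26037 := rfl
  have hs : f (26037) = (-47025) := by norm_num [f, reflect, h2, h1]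
  exact reach_step hs r_m47025

lemma r_26928 : Reach (26928) := by
  have h1 : rev 26928 = 82962 := by norm_num [rev, Nat.ofDigits]
  have h2 : ((26928:ℤ)).toNat = 26928 := rfl
  have hs : f (26928) = (-56034) := by norm_num [f, reflect, h2, h1]
  exact reach_step hs r_m56034

lemma r_28017 : Reach (28017) := by
  have h1 : rev 28017 = 71082 := by norm_num [rev, Nat.ofDigits]
  have h2 : ((28017:ℤ)).toNat = 28017 := rfl
  have hs : f (28017) = (-43065) := by norm_num [f, reflect, h2, h1]
  exact reach_step hs r_m43065

lemma r_28908 : Reach (28908) := by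
  have h1 : rev 28908 = 80982 := by norm_num [rev, Nat.ofDigits]
  have h2 : ((28908:ℤ)).toNat = 28908 := rfl
  have hs : f (28908) = (-52074) := by norm_num [f, reflect, h2, h1]
  exact reach_step hs r_m52074

lemma r_31086 : Reach (31086) := by
  have h1 : rev 31086 = 68013 := by norm_num [rev, Nat.ofDigits]
  have h2 : ((31086:ℤ)).toNat = 31086 := rfl
  have hs : f (31086) = (-36927) := by norm_num [f, reflect, h2, h1]
  exact reach_step hs r_m36927

lemma r_31977 : Reach (31977) := by
  have h1 : rev 31977 = 77913 := by norm_num [rev, Nat.ofDigits]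
  have h2 : ((31977:ℤ)).toNat = 31977 := rfl
  have hs : f (31977) = (-45936) := by norm_num [f, reflect, h2, h1]
  exact reach_step hs r_m45936

lemma r_33066 : Reach (33066) := by
  have h1 : rev 33066 = 66033 := by norm_num [rev, Nat.ofDigits]
  have h2 : ((33066:ℤ)).toNat = 33066 := rfl
  have hs : f (33066) = (-32967) := by norm_num [f, reflect, h2, h1]
  exact reach_step hs r_m32967

lemma r_33957 : Reach (33957) := by
  have h1 : rev 33957 = 75933 := by norm_num [rev, Nat.ofDigits]
  have h2 : ((33957:ℤ)).toNat = 33957 := rfl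
  have hs : f (33957) = (-41976) := by norm_num [f, reflect, h2, h1]
  exact reach_step hs r_m41976

lemma r_35046 : Reach (35046) := by
  have h1 : rev 35046 = 64053 := by norm_num [rev, Nat.ofDigits]
  have h2 : ((35046:ℤ)).toNat = 35046 := rfl
  have hs : f (35046) = (-29007) := by norm_num [f, reflect, h2, h1]
  exact reach_step hs r_m29007

lemma r_35937 : Reach (35937) := by
  have h1 : rev 35937 = 73953 := by norm_num [rev, Nat.ofDigits]
  have h2 : ((35937:ℤ)).toNat = 35937 := rfl
  have hs : f (35937) = (-38016) := by norm_num [f, reflect, h2, h1]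
  exact reach_step hs r_m38016

lemma r_37026 : Reach (37026) := by
  have h1 : rev 37026 = 62073 := by norm_num [rev, Nat.ofDigits]
  have h2 : ((37026:ℤ)).toNat = 37026 := rfl
  have hs : f (37026) = (-25047) := by norm_num [f, reflect, h2, h1]
  exact reach_step hs r_m25047

lemma r_37917 : Reach (37917) := by
  have h1 : rev 37917 = 71973 := by norm_num [rev, Nat.ofDigits]
  have h2 : ((37917:ℤ)).toNat = 37917 := rfl
  have hs : f (37917) = (-34056) := by norm_num [f, reflect, h2, h1]
  exact reach_step hs r_m34056

lemma r_39006 : Reach (39006) := by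
  have h1 : rev 39006 = 60093 := by norm_num [rev, Nat.ofDigits]
  have h2 : ((39006:ℤ)).toNat = 39006 := rfl
  have hs : f (39006) = (-21087) := by norm_num [f, reflect, h2, h1]
  exact reach_step hs r_m21087

lemma r_40986 : Reach (40986) := by
  have h1 : rev 40986 = 68904 := by norm_num [rev, Nat.ofDigits]
  have h2 : ((40986:ℤ)).toNat = 40986 := rfl
  have hs : f (40986) = (-27918) := by norm_num [f, reflect, h2, h1]
  exact reach_step hs r_m27918

lemma r_42075 : Reach (42075) := by
  have h1 : rev 42075 = 57024 := by norm_num [rev, Nat.ofDigits]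
  have h2 : ((42075:ℤ)).toNat = 42075 := rfl
  have hs : f (42075) = (-14949) := by norm_num [f, reflect, h2, h1]
  exact reach_step hs r_m14949

lemma r_42966 : Reach (42966) := by
  have h1 : rev 42966 = 66924 := by norm_num [rev, Nat.ofDigits]
  have h2 : ((42966:ℤ)).toNat = 42966 := rfl
  have hs : f (42966) = (-23958) := by norm_num [f, reflect, h2, h1]
  exact reach_step hs r_m23958

lemma r_44055 : Reach (44055) := by
  have h1 : rev 44055 = 55044 := by norm_num [rev, Nat.ofDigits]
  have h2 : ((44055:ℤ)).toNat = 44055 := rfl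
  have hs : f (44055) = (-10989) := by norm_num [f, reflect, h2, h1]
  exact reach_step hs r_m10989

lemma r_44946 : Reach (44946) := by
  have h1 : rev 44946 = 64944 := by norm_num [rev, Nat.ofDigits]
  have h2 : ((44946:ℤ)).toNat = 44946 := rfl
  have hs : f (44946) = (-19998) := by norm_num [f, reflect, h2, h1]
  exact reach_step hs r_m19998

lemma r_46035 : Reach (46035) := by
  have h1 : rev 46035 = 53064 := by norm_num [rev, Nat.ofDigits]
  have h2 : ((46035:ℤ)).toNat = 46035 := rfl
  have hs : f (46035) = (-7029) := by norm_num [f, reflect, h2, h1]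
  exact reach_step hs r_m7029

lemma r_46926 : Reach (46926) := by
  have h1 : rev 46926 = 62964 := by norm_num [rev, Nat.ofDigits]
  have h2 : ((46926:ℤ)).toNat = 46926 := rfl
  have hs : f (46926) = (-16038) := by norm_num [f, reflect, h2, h1]
  exact reach_step hs r_m16038

lemma r_48015 : Reach (48015) := by
  have h1 : rev 48015 = 51084 := by norm_num [rev, Nat.ofDigits]
  have h2 : ((48015:ℤ)).toNat = 48015 := rfl
  have hs : f (48015) = (-3069) := by norm_num [f, reflect, h2, h1]
  exact reach_step hs r_m3069

lemma r_48906 : Reach (48906) := by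
  have h1 : rev 48906 = 60984 := by norm_num [rev, Nat.ofDigits]
  have h2 : ((48906:ℤ)).toNat = 48906 := rfl
  have hs : f (48906) = (-12078) := by norm_num [f, reflect, h2, h1]
  exact reach_step hs r_m12078

lemma r_51084 : Reach (51084) := by
  have h1 : rev 51084 = 48015 := by norm_num [rev, Nat.ofDigits]
  have h2 : ((51084:ℤ)).toNat = 51084 := rfl
  have hs : f (51084) = (3069) := by norm_num [f, reflect, h2, h1]
  exact reach_step hs r_3069

lemma r_51975 : Reach (51975) := by
  have h1 : rev 51975 = 57915 := by norm_num [rev, Nat.ofDigits]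
  have h2 : ((51975:ℤ)).toNat = 51975 := rfl
  have hs : f (51975) = (-5940) := by norm_num [f, reflect, h2, h1]
  exact reach_step hs r_m5940

lemma r_53064 : Reach (53064) := by
  have h1 : rev 53064 = 46035 := by norm_num [rev, Nat.ofDigits]
  have h2 : ((53064:ℤ)).toNat = 53064 := rfl
  have hs : f (53064) = (7029) := by norm_num [f, reflect, h2, h1]
  exact reach_step hs r_7029

lemma r_53955 : Reach (53955) := by
  have h1 : rev 53955 = 55935 := by norm_num [rev, Nat.ofDigits]
  have h2 : ((53955:ℤ)).toNat = 53955 := rfl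
  have hs : f (53955) = (-1980) := by norm_num [f, reflect, h2, h1]
  exact reach_step hs r_m1980

lemma r_55044 : Reach (55044) := by
  have h1 : rev 55044 = 44055 := by norm_num [rev, Nat.ofDigits]
  have h2 : ((55044:ℤ)).toNat = 55044 := rfl
  have hs : f (55044) = (10989) := by norm_num [f, reflect, h2, h1]
  exact reach_step hs r_10989

lemma r_55935 : Reach (55935) := by
  have h1 : rev 55935 = 53955 := by norm_num [rev, Nat.ofDigits]
  have h2 : ((55935:ℤ)).toNat = 55935 := rfl
  have hs : f (55935) = (1980) := by norm_num [f, reflect, h2, h1]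
  exact reach_step hs r_1980

lemma r_57024 : Reach (57024) := by
  have h1 : rev 57024 = 42075 := by norm_num [rev, Nat.ofDigits]
  have h2 : ((57024:ℤ)).toNat = 57024 := rfl
  have hs : f (57024) = (14949) := by norm_num [f, reflect, h2, h1]
  exact reach_step hs r_14949

lemma r_57915 : Reach (57915) := by
  have h1 : rev 57915 = 51975 := by norm_num [rev, Nat.ofDigits]
  have h2 : ((57915:ℤ)).toNat = 57915 := rfl
  have hs : f (57915) = (5940) := by norm_num [f, reflect, h2, h1]
  exact reach_step hs r_5940

lemma r_58905 : Reach (58905) := by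
  have h1 : rev 58905 = 50985 := by norm_num [rev, Nat.ofDigits]
  have h2 : ((58905:ℤ)).toNat = 58905 := rfl
  have hs : f (58905) = (7920) := by norm_num [f, reflect, h2, h1]
  exact reach_step hs r_7920

lemma r_59004 : Reach (59004) := by
  have h1 : rev 59004 = 40095 := by norm_num [rev, Nat.ofDigits]
  have h2 : ((59004:ℤ)).toNat = 59004 := rfl
  have hs : f (59004) = (18909) := by norm_num [f, reflect, h2, h1]
  exact reach_step hs r_18909

lemma r_60984 : Reach (60984) := by
  have h1 : rev 60984 = 48906 := by norm_num [rev, Nat.ofDigits]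
  have h2 : ((60984:ℤ)).toNat = 60984 := rfl
  have hs : f (60984) = (12078) := by norm_num [f, reflect, h2, h1]
  exact reach_step hs r_12078

lemma r_62073 : Reach (62073) := by
  have h1 : rev 62073 = 37026 := by norm_num [rev, Nat.ofDigits]
  have h2 : ((62073:ℤ)).toNat = 62073 := rfl
  have hs : f (62073) = (25047) := by norm_num [f, reflect, h2, h1]
  exact reach_step hs r_25047

lemma r_62964 : Reach (62964) := by
  have h1 : rev 62964 = 46926 := by norm_num [rev, Nat.ofDigits]
  have h2 : ((62964:ℤ)).toNat = 62964 := rfl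
  have hs : f (62964) = (16038) := by norm_num [f, reflect, h2, h1]
  exact reach_step hs r_16038

lemma r_64053 : Reach (64053) := by
  have h1 : rev 64053 = 35046 := by norm_num [rev, Nat.ofDigits]
  have h2 : ((64053:ℤ)).toNat = 64053 := rfl
  have hs : f (64053) = (29007) := by norm_num [f, reflect, h2, h1]
  exact reach_step hs r_29007

lemma r_64944 : Reach (64944) := by
  have h1 : rev 64944 = 44946 := by norm_num [rev, Nat.ofDigits]
  have h2 : ((64944:ℤ)).toNat = 64944 := rfl
  have hs : f (64944) = (19998) := by norm_num [f, reflect, h2, h1]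
  exact reach_step hs r_19998

lemma r_66033 : Reach (66033) := by
  have h1 : rev 66033 = 33066 := by norm_num [rev, Nat.ofDigits]
  have h2 : ((66033:ℤ)).toNat = 66033 := rfl
  have hs : f (66033) = (32967) := by norm_num [f, reflect, h2, h1]
  exact reach_step hs r_32967

lemma r_66924 : Reach (66924) := by
  have h1 : rev 66924 = 42966 := by norm_num [rev, Nat.ofDigits]
  have h2 : ((66924:ℤ)).toNat = 66924 := rfl
  have hs : f (66924) = (23958) := by norm_num [f, reflect, h2, h1]
  exact reach_step hs r_23958

lemma r_68013 : Reach (68013) := by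
  have h1 : rev 68013 = 31086 := by norm_num [rev, Nat.ofDigits]
  have h2 : ((68013:ℤ)).toNat = 68013 := rfl
  have hs : f (68013) = (36927) := by norm_num [f, reflect, h2, h1]
  exact reach_step hs r_36927

lemma r_68904 : Reach (68904) := by
  have h1 : rev 68904 = 40986 := by norm_num [rev, Nat.ofDigits]
  have h2 : ((68904:ℤ)).toNat = 68904 := rfl
  have hs : f (68904) = (27918) := by norm_num [f, reflect, h2, h1]
  exact reach_step hs r_27918

lemma r_71082 : Reach (71082) := by
  have h1 : rev 71082 = 28017 := by norm_num [rev, Nat.ofDigits]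
  have h2 : ((71082:ℤ)).toNat = 71082 := rfl
  have hs : f (71082) = (43065) := by norm_num [f, reflect, h2, h1]
  exact reach_step hs r_43065

lemma r_71973 : Reach (71973) := by
  have h1 : rev 71973 = 37917 := by norm_num [rev, Nat.ofDigits]
  have h2 : ((71973:ℤ)).toNat = 71973 := rfl
  have hs : f (71973) = (34056) := by norm_num [f, reflect, h2, h1]
  exact reach_step hs r_34056

lemma r_73062 : Reach (73062) := by
  have h1 : rev 73062 = 26037 := by norm_num [rev, Nat.ofDigits]
  have h2 : ((73062:ℤ)).toNat = 73062 := rfl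
  have hs : f (73062) = (47025) := by norm_num [f, reflect, h2, h1]
  exact reach_step hs r_47025

lemma r_73953 : Reach (73953) := by
  have h1 : rev 73953 = 35937 := by norm_num [rev, Nat.ofDigits]
  have h2 : ((73953:ℤ)).toNat = 73953 := rfl
  have hs : f (73953) = (38016) := by norm_num [f, reflect, h2, h1]
  exact reach_step hs r_38016

lemma r_75042 : Reach (75042) := by
  have h1 : rev 75042 = 24057 := by norm_num [rev, Nat.ofDigits]
  have h2 : ((75042:ℤ)).toNat = 75042 := rfl
  have hs : f (75042) = (50985) := by norm_num [f, reflect, h2, h1]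
  exact reach_step hs r_50985

lemma r_75933 : Reach (75933) := by
  have h1 : rev 75933 = 33957 := by norm_num [rev, Nat.ofDigits]
  have h2 : ((75933:ℤ)).toNat = 75933 := rfl
  have hs : f (75933) = (41976) := by norm_num [f, reflect, h2, h1]
  exact reach_step hs r_41976

lemma r_77022 : Reach (77022) := by
  have h1 : rev 77022 = 22077 := by norm_num [rev, Nat.ofDigits]
  have h2 : ((77022:ℤ)).toNat = 77022 := rfl
  have hs : f (77022) = (54945) := by norm_num [f, reflect, h2, h1]
  exact reach_step hs r_54945

lemma r_77913 : Reach (77913) := by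
  have h1 : rev 77913 = 31977 := by norm_num [rev, Nat.ofDigits]
  have h2 : ((77913:ℤ)).toNat = 77913 := rfl
  have hs : f (77913) = (45936) := by norm_num [f, reflect, h2, h1]
  exact reach_step hs r_45936

lemma r_78903 : Reach (78903) := by
  have h1 : rev 78903 = 30987 := by norm_num [rev, Nat.ofDigits]
  have h2 : ((78903:ℤ)).toNat = 78903 := rfl
  have hs : f (78903) = (47916) := by norm_num [f, reflect, h2, h1]
  exact reach_step hs r_47916

lemma r_79002 : Reach (79002) := by
  have h1 : rev 79002 = 20097 := by norm_num [rev, Nat.ofDigits]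
  have h2 : ((79002:ℤ)).toNat = 79002 := rfl
  have hs : f (79002) = (58905) := by norm_num [f, reflect, h2, h1]
  exact reach_step hs r_58905

lemma r_80982 : Reach (80982) := by
  have h1 : rev 80982 = 28908 := by norm_num [rev, Nat.ofDigits]
  have h2 : ((80982:ℤ)).toNat = 80982 := rfl
  have hs : f (80982) = (52074) := by norm_num [f, reflect, h2, h1]
  exact reach_step hs r_52074

lemma r_81081 : Reach (81081) := by
  have h1 : rev 81081 = 18018 := by norm_num [rev, Nat.ofDigits]
  have h2 : ((81081:ℤ)).toNat = 81081 := rfl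
  have hs : f (81081) = (63063) := by norm_num [f, reflect, h2, h1]
  exact reach_step hs r_63063

lemma r_82071 : Reach (82071) := by
  have h1 : rev 82071 = 17028 := by norm_num [rev, Nat.ofDigits]
  have h2 : ((82071:ℤ)).toNat = 82071 := rfl
  have hs : f (82071) = (65043) := by norm_num [f, reflect, h2, h1]
  exact reach_step hs r_65043

lemma r_82962 : Reach (82962) := by
  have h1 : rev 82962 = 26928 := by norm_num [rev, Nat.ofDigits]
  have h2 : ((82962:ℤ)).toNat = 82962 := rfl
  have hs : f (82962) = (56034) := by norm_num [f, reflect, h2, h1]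
  exact reach_step hs r_56034

lemma r_83061 : Reach (83061) := by
  have h1 : rev 83061 = 16038 := by norm_num [rev, Nat.ofDigits]
  have h2 : ((83061:ℤ)).toNat = 83061 := rfl
  have hs : f (83061) = (67023) := by norm_num [f, reflect, h2, h1]
  exact reach_step hs r_67023

lemma r_84051 : Reach (84051) := by
  have h1 : rev 84051 = 15048 := by norm_num [rev, Nat.ofDigits]
  have h2 : ((84051:ℤ)).toNat = 84051 := rfl
  have hs : f (84051) = (69003) := by norm_num [f, reflect, h2, h1]
  exact reach_step hs r_69003

lemma r_84942 : Reach (84942) := by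
  have h1 : rev 84942 = 24948 := by norm_num [rev, Nat.ofDigits]
  have h2 : ((84942:ℤ)).toNat = 84942 := rfl
  have hs : f (84942) = (59994) := by norm_num [f, reflect, h2, h1]
  exact reach_step hs r_59994

lemma r_85041 : Reach (85041) := by
  have h1 : rev 85041 = 14058 := by norm_num [rev, Nat.ofDigits]
  have h2 : ((85041:ℤ)).toNat = 85041 := rfl
  have hs : f (85041) = (70983) := by norm_num [f, reflect, h2, h1]
  exact reach_step hs r_70983

lemma r_86031 : Reach (86031) := by
  have h1 : rev 86031 = 13068 := by norm_num [rev, Nat.ofDigits]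
  have h2 : ((86031:ℤ)).toNat = 86031 := rfl
  have hs : f (86031) = (72963) := by norm_num [f, reflect, h2, h1]
  exact reach_step hs r_72963

lemma r_86922 : Reach (86922) := by
  have h1 : rev 86922 = 22968 := by norm_num [rev, Nat.ofDigits]
  have h2 : ((86922:ℤ)).toNat = 86922 := rfl
  have hs : f (86922) = (63954) := by norm_num [f, reflect, h2, h1]
  exact reach_step hs r_63954

lemma r_87021 : Reach (87021) := by
  have h1 : rev 87021 = 12078 := by norm_num [rev, Nat.ofDigits]
  have h2 : ((87021:ℤ)).toNat = 87021 := rfl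
  have hs : f (87021) = (74943) := by norm_num [f, reflect, h2, h1]
  exact reach_step hs r_74943

lemma r_88011 : Reach (88011) := by
  have h1 : rev 88011 = 11088 := by norm_num [rev, Nat.ofDigits]
  have h2 : ((88011:ℤ)).toNat = 88011 := rfl
  have hs : f (88011) = (76923) := by norm_num [f, reflect, h2, h1]
  exact reach_step hs r_76923

lemma r_88902 : Reach (88902) := by
  have h1 : rev 88902 = 20988 := by norm_num [rev, Nat.ofDigits]
  have h2 : ((88902:ℤ)).toNat = 88902 := rfl
  have hs : f (88902) = (67914) := by norm_num [f, reflect, h2, h1]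
  exact reach_step hs r_67914

lemma r_89001 : Reach (89001) := by
  have h1 : rev 89001 = 10098 := by norm_num [rev, Nat.ofDigits]
  have h2 : ((89001:ℤ)).toNat = 89001 := rfl
  have hs : f (89001) = (78903) := by norm_num [f, reflect, h2, h1]
  exact reach_step hs r_78903

lemma r_89991 : Reach (89991) := by
  have h1 : rev 89991 = 19998 := by norm_num [rev, Nat.ofDigits]
  have h2 : ((89991:ℤ)).toNat = 89991 := rfl
  have hs : f (89991) = (69993) := by norm_num [f, reflect, h2, h1]
  exact reach_step hs r_69993

lemma r_90981 : Reach (90981) := by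
  have h1 : rev 90981 = 18909 := by norm_num [rev, Nat.ofDigits]
  have h2 : ((90981:ℤ)).toNat = 90981 := rfl
  have hs : f (90981) = (72072) := by norm_num [f, reflect, h2, h1]
  exact reach_step hs r_72072

lemma r_91971 : Reach (91971) := by
  have h1 : rev 91971 = 17919 := by norm_num [rev, Nat.ofDigits]
  have h2 : ((91971:ℤ)).toNat = 91971 := rfl
  have hs : f (91971) = (74052) := by norm_num [f, reflect, h2, h1]
  exact reach_step hs r_74052

lemma r_92961 : Reach (92961) := by
  have h1 : rev 92961 = 16929 := by norm_num [rev, Nat.ofDigits]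
  have h2 : ((92961:ℤ)).toNat = 92961 := rfl
  have hs : f (92961) = (76032) := by norm_num [f, reflect, h2, h1]
  exact reach_step hs r_76032

lemma r_93951 : Reach (93951) := by
  have h1 : rev 93951 = 15939 := by norm_num [rev, Nat.ofDigits]
  have h2 : ((93951:ℤ)).toNat = 93951 := rfl
  have hs : f (93951) = (78012) := by norm_num [f, reflect, h2, h1]
  exact reach_step hs r_78012

lemma r_94941 : Reach (94941) := by
  have h1 : rev 94941 = 14949 := by norm_num [rev, Nat.ofDigits]
  have h2 : ((94941:ℤ)).toNat = 94941 := rfl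
  have hs : f (94941) = (79992) := by norm_num [f, reflect, h2, h1]
  exact reach_step hs r_79992

lemma r_95931 : Reach (95931) := by
  have h1 : rev 95931 = 13959 := by norm_num [rev, Nat.ofDigits]
  have h2 : ((95931:ℤ)).toNat = 95931 := rfl
  have hs : f (95931) = (81972) := by norm_num [f, reflect, h2, h1]
  exact reach_step hs r_81972

lemma r_96921 : Reach (96921) := by
  have h1 : rev 96921 = 12969 := by norm_num [rev, Nat.ofDigits]
  have h2 : ((96921:ℤ)).toNat = 96921 := rfl
  have hs : f (96921) = (83952) := by norm_num [f, reflect, h2, h1]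
  exact reach_step hs r_83952

lemma r_97911 : Reach (97911) := by
  have h1 : rev 97911 = 11979 := by norm_num [rev, Nat.ofDigits]
  have h2 : ((97911:ℤ)).toNat = 97911 := rfl
  have hs : f (97911) = (85932) := by norm_num [f, reflect, h2, h1]
  exact reach_step hs r_85932

lemma r_98901 : Reach (98901) := by
  have h1 : rev 98901 = 10989 := by norm_num [rev, Nat.ofDigits]
  have h2 : ((98901:ℤ)).toNat = 98901 := rfl
  have hs : f (98901) = (87912) := by norm_num [f, reflect, h2, h1]
  exact reach_step hs r_87912

lemma grid (x y : ℤ) (hx1 : -9 ≤ x) (hx2 : x ≤ 9) (hy1 : -9 ≤ y) (hy2 : y ≤ 9) :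
    Reach (9999*x+990*y) := by
  interval_cases x <;> interval_cases y
  · exact r_m98901
  · exact r_m97911
  · exact r_m96921
  · exact r_m95931
  · exact r_m94941
  · exact r_m93951
  · exact r_m92961
  · exact r_m91971
  · exact r_m90981
  · exact r_m89991
  · exact r_m89001
  · exact r_m88011
  · exact r_m87021
  · exact r_m86031
  · exact r_m85041
  · exact r_m84051
  · exact r_m83061
  · exact r_m82071
  · exact r_m81081
  · exact r_m88902
  · exact r_m87912
  · exact r_m86922
  · exact r_m85932
  · exact r_m84942
  · exact r_m83952
  · exact r_m82962
  · exact r_m81972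
  · exact r_m80982
  · exact r_m79992
  · exact r_m79002
  · exact r_m78012
  · exact r_m77022
  · exact r_m76032
  · exact r_m75042
  · exact r_m74052
  · exact r_m73062
  · exact r_m72072
  · exact r_m71082
  · exact r_m78903
  · exact r_m77913
  · exact r_m76923
  · exact r_m75933
  · exact r_m74943
  · exact r_m73953
  · exact r_m72963
  · exact r_m71973
  · exact r_m70983
  · exact r_m69993
  · exact r_m69003
  · exact r_m68013
  · exact r_m67023
  · exact r_m66033
  · exact r_m65043
  · exact r_m64053
  · exact r_m63063
  · exact r_m62073
  · exact r_m61083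
  · exact r_m68904
  · exact r_m67914
  · exact r_m66924
  · exact r_m65934
  · exact r_m64944
  · exact r_m63954
  · exact r_m62964
  · exact r_m61974
  · exact r_m60984
  · exact r_m59994
  · exact r_m59004
  · exact r_m58014
  · exact r_m57024
  · exact r_m56034
  · exact r_m55044
  · exact r_m54054
  · exact r_m53064
  · exact r_m52074
  · exact r_m51084
  · exact r_m58905
  · exact r_m57915
  · exact r_m56925
  · exact r_m55935
  · exact r_m54945
  · exact r_m53955
  · exact r_m52965
  · exact r_m51975
  · exact r_m50985
  · exact r_m49995
  · exact r_m49005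
  · exact r_m48015
  · exact r_m47025
  · exact r_m46035
  · exact r_m45045
  · exact r_m44055
  · exact r_m43065
  · exact r_m42075
  · exact r_m41085
  · exact r_m48906
  · exact r_m47916
  · exact r_m46926
  · exact r_m45936
  · exact r_m44946
  · exact r_m43956
  · exact r_m42966
  · exact r_m41976
  · exact r_m40986
  · exact r_m39996
  · exact r_m39006
  · exact r_m38016
  · exact r_m37026
  · exact r_m36036
  · exact r_m35046
  · exact r_m34056
  · exact r_m33066
  · exact r_m32076
  · exact r_m31086
  · exact r_m38907
  · exact r_m37917
  · exact r_m36927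
  · exact r_m35937
  · exact r_m34947
  · exact r_m33957
  · exact r_m32967
  · exact r_m31977
  · exact r_m30987
  · exact r_m29997
  · exact r_m29007
  · exact r_m28017
  · exact r_m27027
  · exact r_m26037
  · exact r_m25047
  · exact r_m24057
  · exact r_m23067
  · exact r_m22077
  · exact r_m21087
  · exact r_m28908
  · exact r_m27918
  · exact r_m26928
  · exact r_m25938
  · exact r_m24948
  · exact r_m23958
  · exact r_m22968
  · exact r_m21978
  · exact r_m20988
  · exact r_m19998
  · exact r_m19008
  · exact r_m18018
  · exact r_m17028
  · exact r_m16038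
  · exact r_m15048
  · exact r_m14058
  · exact r_m13068
  · exact r_m12078
  · exact r_m11088
  · exact r_m18909
  · exact r_m17919
  · exact r_m16929
  · exact r_m15939
  · exact r_m14949
  · exact r_m13959
  · exact r_m12969
  · exact r_m11979
  · exact r_m10989
  · exact r_m9999
  · exact r_m9009
  · exact r_m8019
  · exact r_m7029
  · exact r_m6039
  · exact r_m5049
  · exact r_m4059
  · exact r_m3069
  · exact r_m2079
  · exact r_m1089
  · exact r_m8910
  · exact r_m7920
  · exact r_m6930
  · exact r_m5940
  · exact r_m4950
  · exact r_m3960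
  · exact r_m2970
  · exact r_m1980
  · exact r_m990
  · exact r_0
  · exact r_990
  · exact r_1980
  · exact r_2970
  · exact r_3960
  · exact r_4950
  · exact r_5940
  · exact r_6930
  · exact r_7920
  · exact r_8910
  · exact r_1089
  · exact r_2079
  · exact r_3069
  · exact r_4059
  · exact r_5049
  · exact r_6039
  · exact r_7029
  · exact r_8019
  · exact r_9009
  · exact r_9999
  · exact r_10989
  · exact r_11979
  · exact r_12969
  · exact r_13959
  · exact r_14949
  · exact r_15939
  · exact r_16929
  · exact r_17919
  · exact r_18909
  · exact r_11088
  · exact r_12078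
  · exact r_13068
  · exact r_14058
  · exact r_15048
  · exact r_16038
  · exact r_17028
  · exact r_18018
  · exact r_19008
  · exact r_19998
  · exact r_20988
  · exact r_21978
  · exact r_22968
  · exact r_23958
  · exact r_24948
  · exact r_25938
  · exact r_26928
  · exact r_27918
  · exact r_28908
  · exact r_21087
  · exact r_22077
  · exact r_23067
  · exact r_24057
  · exact r_25047
  · exact r_26037
  · exact r_27027
  · exact r_28017
  · exact r_29007
  · exact r_29997
  · exact r_30987
  · exact r_31977
  · exact r_32967
  · exact r_33957
  · exact r_34947
  · exact r_35937
  · exact r_36927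
  · exact r_37917
  · exact r_38907
  · exact r_31086
  · exact r_32076
  · exact r_33066
  · exact r_34056
  · exact r_35046
  · exact r_36036
  · exact r_37026
  · exact r_38016
  · exact r_39006
  · exact r_39996
  · exact r_40986
  · exact r_41976
  · exact r_42966
  · exact r_43956
  · exact r_44946
  · exact r_45936
  · exact r_46926
  · exact r_47916
  · exact r_48906
  · exact r_41085
  · exact r_42075
  · exact r_43065
  · exact r_44055
  · exact r_45045
  · exact r_46035
  · exact r_47025
  · exact r_48015
  · exact r_49005
  · exact r_49995
  · exact r_50985
  · exact r_51975
  · exact r_52965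
  · exact r_53955
  · exact r_54945
  · exact r_55935
  · exact r_56925
  · exact r_57915
  · exact r_58905
  · exact r_51084
  · exact r_52074
  · exact r_53064
  · exact r_54054
  · exact r_55044
  · exact r_56034
  · exact r_57024
  · exact r_58014
  · exact r_59004
  · exact r_59994
  · exact r_60984
  · exact r_61974
  · exact r_62964
  · exact r_63954
  · exact r_64944
  · exact r_65934
  · exact r_66924
  · exact r_67914
  · exact r_68904
  · exact r_61083
  · exact r_62073
  · exact r_63063
  · exact r_64053
  · exact r_65043
  · exact r_66033
  · exact r_67023
  · exact r_68013
  · exact r_69003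
  · exact r_69993
  · exact r_70983
  · exact r_71973
  · exact r_72963
  · exact r_73953
  · exact r_74943
  · exact r_75933
  · exact r_76923
  · exact r_77913
  · exact r_78903
  · exact r_71082
  · exact r_72072
  · exact r_73062
  · exact r_74052
  · exact r_75042
  · exact r_76032
  · exact r_77022
  · exact r_78012
  · exact r_79002
  · exact r_79992
  · exact r_80982
  · exact r_81972
  · exact r_82962
  · exact r_83952
  · exact r_84942
  · exact r_85932
  · exact r_86922
  · exact r_87912
  · exact r_88902
  · exact r_81081
  · exact r_82071
  · exact r_83061
  · exact r_84051
  · exact r_85041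
  · exact r_86031
  · exact r_87021
  · exact r_88011
  · exact r_89001
  · exact r_89991
  · exact r_90981
  · exact r_91971
  · exact r_92961
  · exact r_93951
  · exact r_94941
  · exact r_95931
  · exact r_96921
  · exact r_97911
  · exact r_98901

theorem five_digit_limits (n : ℤ) (h1 : 10000 ≤ n) (h2 : n ≤ 99999) :
    ∃ k : ℕ, f^[k] n = 0 ∨ f^[k] n = 2178 ∨ f^[k] n = 21978 := by
  have hmn : ((n.toNat : ℤ)) = n := Int.toNat_of_nonneg (by linarith)
  set m := n.toNat with hmdef
  have hm1 : 10000 ≤ m := by omega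
  have hm2 : m < 100000 := by omega
  have hlen : (Nat.digits 10 m).length = 5 := by
    rw [Nat.digits_len 10 m (by norm_num) (by omega)]
    have : Nat.log 10 m = 4 := Nat.log_eq_of_pow_le_of_lt_pow (by norm_num; omega) (by norm_num; omega)
    omega
  have hdig : ∀ u ∈ Nat.digits 10 m, u < 10 := fun u hu => Nat.digits_lt_base (by norm_num) hu
  have hof : Nat.ofDigits 10 (Nat.digits 10 m) = m := Nat.ofDigits_digits 10 m
  rcases hL : Nat.digits 10 m with _ | ⟨e, _ | ⟨d, _ | ⟨c, _ | ⟨b, _ | ⟨a, rest⟩⟩⟩⟩⟩ <;>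
    rw [hL] at hlen <;> simp at hlen
  have hrest : rest = [] := by
    exact hlen
  subst hrest
  have he : e < 10 := hdig e (by rw [hL]; simp)
  have hd : d < 10 := hdig d (by rw [hL]; simp)
  have hb : b < 10 := hdig b (by rw [hL]; simp)
  have ha : a < 10 := hdig a (by rw [hL]; simp)
  have hmval : (m:ℤ) = e + 10*d + 100*c + 1000*b + 10000*a := by
    rw [hL] at hof
    simp [Nat.ofDigits] at hof
    push_cast [← hof]
    ring
  have hrev : ((rev m : ℕ):ℤ) = a + 10*b + 100*c + 1000*d + 10000*e := by
    unfold rev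
    rw [hL]
    simp [Nat.ofDigits]
    ring
  have hfn : f n = 9999*((a:ℤ)-e) + 990*((b:ℤ)-d) := by
    have h0 : (0:ℤ) ≤ n := by linarith
    rw [f, reflect, if_pos h0, ← hmdef, hrev, ← hmn, hmval]
    ring
  exact reach_step hfn (grid ((a:ℤ)-e) ((b:ℤ)-d) (by omega) (by omega) (by omega) (by omega))
end

section
/- For every k ≥ 2, the integers 22·(10^k − 1), −66·(10^k − 1), −22·(10^k − 1), 66·(10^k − 1) form a 4-cycle of the reflective step map: f(22·(10^k − 1)) = −66·(10^k − 1), f(−66·(10^k − 1)) = −22·(10^k − 1), f(−22·(10^k − 1)) = 66·(10^k − 1), and f(66·(10^k − 1)) = 22·(10^k − 1); in particular f^[4](22·(10^k − 1)) = 22·(10^k − 1). (This family generates the cyclical limits 2178, 21978, 219978, 2199978, … and their triples 6534, 65934, 659934, ….) -/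
/-!
Writing `k = n + 2`, the four members of the cycle have the decimal expansions
`21 9…9 78`, `65 9…9 34`, and their digit reversals are `87 9…9 12 = 88 (10^k - 1)` and
`43 9…9 56 = 44 (10^k - 1)` (each with `n` nines). Hence
`f (22 (10^k - 1)) = (22 - 88)(10^k - 1)` and `f (-66 (10^k - 1)) = (44 - 66)(10^k - 1)`,
and the remaining two steps are the negatives of these.
-/

theorem f_natCast (m : ℕ) : f m = m - rev m := by
  rw [f, reflect, if_pos (Int.natCast_nonneg m), Int.toNat_natCast, sub_eq_add_neg]

theorem f_neg_natCast (m : ℕ) : f (-m) = rev m - m := by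
  rcases Nat.eq_zero_or_pos m with rfl | hm
  · simp [f, reflect, rev]
  · rw [f, reflect, if_neg (by omega), neg_neg, Int.toNat_natCast, neg_add_eq_sub]

theorem rev_ofDigits {L : List ℕ} (hL : ∀ x ∈ L, x < 10) (hlast : ∀ h : L ≠ [], L.getLast h ≠ 0) :
    rev (Nat.ofDigits 10 L) = Nat.ofDigits 10 L.reverse := by
  rw [rev, Nat.digits_ofDigits 10 (by norm_num) L hL hlast]

theorem ofDigits_replicate_nine (n : ℕ) : Nat.ofDigits 10 (List.replicate n 9) + 1 = 10 ^ n := by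
  induction n with
  | zero => rfl
  | succ n ih =>
    rw [List.replicate_succ, Nat.ofDigits_cons, pow_succ]
    omega

/-- The digit list of the number written `dc 9…9 ba` in decimal (least significant digit first),
with `n` nines in the middle. -/
def ninesBetween (n a b c d : ℕ) : List ℕ := [a, b] ++ List.replicate n 9 ++ [c, d]

theorem reverse_ninesBetween (n a b c d : ℕ) :
    (ninesBetween n a b c d).reverse = ninesBetween n d c b a := by
  simp [ninesBetween]

theorem ofDigits_ninesBetween (n a b c d : ℕ) :
    ((Nat.ofDigits 10 (ninesBetween n a b c d) : ℕ) : ℤ) =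
      a + 10 * b - 100 + 10 ^ (n + 2) * (c + 10 * d + 1) := by
  have hnines : ((Nat.ofDigits 10 (List.replicate n 9) : ℕ) : ℤ) + 1 = 10 ^ n := by
    exact_mod_cast ofDigits_replicate_nine n
  simp only [ninesBetween, Nat.ofDigits_append, Nat.ofDigits_cons, Nat.ofDigits_nil,
    List.length_append, List.length_cons, List.length_nil, List.length_replicate]
  push_cast at hnines ⊢
  linear_combination 100 * hnines

theorem rev_ofDigits_ninesBetween {n a b c d : ℕ} (hd : d ≠ 0)
    (hdigits : a < 10 ∧ b < 10 ∧ c < 10 ∧ d < 10) :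
    rev (Nat.ofDigits 10 (ninesBetween n a b c d)) =
      Nat.ofDigits 10 (ninesBetween n d c b a) := by
  obtain ⟨ha, hb, hc, hd'⟩ := hdigits
  rw [rev_ofDigits, reverse_ninesBetween]
  · intro x hx
    simp only [ninesBetween, List.mem_append, List.mem_cons, List.mem_replicate,
      List.not_mem_nil, or_false] at hx
    omega
  · intro _
    simpa [ninesBetween] using hd

theorem cycle_family_22 (k : ℕ) (hk : 2 ≤ k) :
    f (22 * (10 ^ k - 1)) = -(66 * (10 ^ k - 1)) ∧
    f (-(66 * (10 ^ k - 1))) = -(22 * (10 ^ k - 1)) ∧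
    f (-(22 * (10 ^ k - 1))) = 66 * (10 ^ k - 1) ∧
    f (66 * (10 ^ k - 1)) = 22 * (10 ^ k - 1) ∧
    f^[4] (22 * (10 ^ k - 1)) = 22 * (10 ^ k - 1) := by
  obtain ⟨n, rfl⟩ : ∃ n, k = n + 2 := ⟨k - 2, by omega⟩
  have h22 : ((Nat.ofDigits 10 (ninesBetween n 8 7 1 2) : ℕ) : ℤ) = 22 * (10 ^ (n + 2) - 1) := by
    rw [ofDigits_ninesBetween]; push_cast; ring
  have h66 : ((Nat.ofDigits 10 (ninesBetween n 4 3 5 6) : ℕ) : ℤ) = 66 * (10 ^ (n + 2) - 1) := by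
    rw [ofDigits_ninesBetween]; push_cast; ring
  have hrev22 := rev_ofDigits_ninesBetween (n := n) (a := 8) (b := 7) (c := 1) (d := 2)
    (by norm_num) (by norm_num)
  have hrev66 := rev_ofDigits_ninesBetween (n := n) (a := 4) (b := 3) (c := 5) (d := 6)
    (by norm_num) (by norm_num)
  have e1 : f (22 * (10 ^ (n + 2) - 1)) = -(66 * (10 ^ (n + 2) - 1)) := by
    rw [← h22, f_natCast, hrev22, h22, ofDigits_ninesBetween]; push_cast; ring
  have e2 : f (-(66 * (10 ^ (n + 2) - 1))) = -(22 * (10 ^ (n + 2) - 1)) := by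
    rw [← h66, f_neg_natCast, hrev66, h66, ofDigits_ninesBetween]; push_cast; ring
  have e3 : f (-(22 * (10 ^ (n + 2) - 1))) = 66 * (10 ^ (n + 2) - 1) := by
    rw [← h22, f_neg_natCast, hrev22, h22, ofDigits_ninesBetween]; push_cast; ring
  have e4 : f (66 * (10 ^ (n + 2) - 1)) = 22 * (10 ^ (n + 2) - 1) := by
    rw [← h66, f_natCast, hrev66, h66, ofDigits_ninesBetween]; push_cast; ring
  refine ⟨e1, e2, e3, e4, ?_⟩
  show f (f (f (f _))) = _
  rw [e1, e2, e3, e4]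
end

section
/- For every k ≥ 4, the integers 2178·(10^k + 1), −6534·(10^k + 1), −2178·(10^k + 1), 6534·(10^k + 1) form a 4-cycle of the reflective step map: f(2178·(10^k + 1)) = −6534·(10^k + 1), f(−6534·(10^k + 1)) = −2178·(10^k + 1), f(−2178·(10^k + 1)) = 6534·(10^k + 1), and f(6534·(10^k + 1)) = 2178·(10^k + 1). (This family generates the cyclical limits 21782178, 217802178, 2178002178, … and 65346534, 653406534, ….) -/
lemma ofDigits_rep_zero (b j : ℕ) : Nat.ofDigits b (List.replicate j 0) = 0 := by
  induction j with
  | zero => simp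
  | succ j ih => simp [List.replicate_succ, Nat.ofDigits_cons, ih]

lemma rev_key (c rc : ℕ) (hc : 0 < c) (hlen : (Nat.digits 10 c).length = 4)
    (hrc : Nat.ofDigits 10 (Nat.digits 10 c).reverse = rc)
    (k : ℕ) (hk : 4 ≤ k) :
    rev (c * (10 ^ k + 1)) = rc * (10 ^ k + 1) := by
  obtain ⟨j, rfl⟩ : ∃ j, k = 4 + j := ⟨k - 4, by omega⟩
  have h1 : c * (10 ^ (4 + j) + 1) = c + 10 ^ ((Nat.digits 10 c).length + j) * c := by
    rw [hlen]; ring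
  have h2 : Nat.digits 10 (c * (10 ^ (4 + j) + 1)) =
      Nat.digits 10 c ++ List.replicate j 0 ++ Nat.digits 10 c := by
    rw [h1, Nat.digits_append_zeroes_append_digits (by norm_num) hc]
  unfold rev
  rw [h2]
  simp only [List.reverse_append, List.reverse_replicate, Nat.ofDigits_append,
    List.length_reverse, List.length_replicate, hrc, hlen]
  rw [ofDigits_rep_zero]
  push_cast
  ring

theorem cycle_family_2178 (k : ℕ) (hk : 4 ≤ k) :
    f (2178 * (10 ^ k + 1)) = -(6534 * (10 ^ k + 1)) ∧
    f (-(6534 * (10 ^ k + 1))) = -(2178 * (10 ^ k + 1)) ∧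
    f (-(2178 * (10 ^ k + 1))) = 6534 * (10 ^ k + 1) ∧
    f (6534 * (10 ^ k + 1)) = 2178 * (10 ^ k + 1) := by
  have hpow : (0:ℤ) < 10 ^ k + 1 := by positivity
  have r2178 : rev (2178 * (10 ^ k + 1)) = 8712 * (10 ^ k + 1) :=
    rev_key 2178 8712 (by norm_num) (by norm_num) (by norm_num [Nat.ofDigits]) k hk
  have r6534 : rev (6534 * (10 ^ k + 1)) = 4356 * (10 ^ k + 1) :=
    rev_key 6534 4356 (by norm_num) (by norm_num) (by norm_num [Nat.ofDigits]) k hk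
  have hpos2 : (0:ℤ) ≤ 2178 * (10 ^ k + 1) := by positivity
  have hpos6 : (0:ℤ) ≤ 6534 * (10 ^ k + 1) := by positivity
  have hneg2 : ¬ (0:ℤ) ≤ -(2178 * (10 ^ k + 1)) := by
    simp only [not_le]; linarith
  have hneg6 : ¬ (0:ℤ) ≤ -(6534 * (10 ^ k + 1)) := by
    simp only [not_le]; linarith
  have t2 : (2178 * ((10:ℤ) ^ k + 1)).toNat = 2178 * (10 ^ k + 1) := by
    zify; rw [Int.toNat_of_nonneg hpos2]
  have t6 : (6534 * ((10:ℤ) ^ k + 1)).toNat = 6534 * (10 ^ k + 1) := by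
    zify; rw [Int.toNat_of_nonneg hpos6]
  refine ⟨?_, ?_, ?_, ?_⟩ <;>
    simp only [f, reflect, hpos2, hpos6, hneg2, hneg6, if_true, if_false, neg_neg,
      t2, t6, r2178, r6534] <;> push_cast <;> ring
end
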